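/- arXiv:2212.14139 — 8 statements merged into one kernel-verified Lean document; each statement's English description precedes it below -/
import Mathlib

section
/- Let a, b, c be nonzero integers with gcd(a, b, c) = 1 and let m, n be positive integers. If X, Y ∈ M₂(ℤ) satisfy aX^m + bY^n = cI and XY ≠ YX, then both X^m and Y^n are scalar matrices. -/
lemma sq_eq (A : Matrix (Fin 2) (Fin 2) ℤ) :
    A * A = A.trace • A - A.det • (1 : Matrix (Fin 2) (Fin 2) ℤ) := by
  ext i j
  simp only [Matrix.mul_apply, Matrix.sub_apply, Matrix.smul_apply, smul_eq_mul,
    Matrix.trace_fin_two, Matrix.det_fin_two, Matrix.one_apply, Fin.sum_univ_two]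
  fin_cases i <;> fin_cases j <;> simp <;> ring

lemma pow_lin (A : Matrix (Fin 2) (Fin 2) ℤ) (m : ℕ) (hm : 0 < m) :
    ∃ p q : ℤ, A ^ m = p • A + q • (1 : Matrix (Fin 2) (Fin 2) ℤ) := by
  induction m with
  | zero => exact absurd hm (lt_irrefl 0)
  | succ k ih =>
    rcases Nat.eq_zero_or_pos k with hk | hk
    · subst hk
      exact ⟨1, 0, by simp⟩
    · obtain ⟨p, q, hpq⟩ := ih hk
      refine ⟨p * A.trace + q, -(p * A.det), ?_⟩
      rw [pow_succ, hpq, add_mul, smul_mul_assoc, smul_mul_assoc, one_mul, sq_eq]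
      rw [smul_sub]
      module

lemma comm_of_lin (u v w : ℤ) (hv : v ≠ 0) (X Y : Matrix (Fin 2) (Fin 2) ℤ)
    (h : u • X + v • Y = w • (1 : Matrix (Fin 2) (Fin 2) ℤ)) : X * Y = Y * X := by
  have hvY : v • Y = w • (1 : Matrix (Fin 2) (Fin 2) ℤ) - u • X := by
    rw [← h]; abel
  have h1 : v • (X * Y) = v • (Y * X) := by
    calc v • (X * Y) = X * (v • Y) := by rw [Matrix.mul_smul]
    _ = w • X - u • (X * X) := by rw [hvY]; rw [mul_sub, Matrix.mul_smul, Matrix.mul_smul]; simp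
    _ = (v • Y) * X := by rw [hvY]; rw [sub_mul, Matrix.smul_mul, Matrix.smul_mul]; simp
    _ = v • (Y * X) := by rw [Matrix.smul_mul]
  exact smul_right_injective (Matrix (Fin 2) (Fin 2) ℤ) hv h1

theorem stmt_0 (a b c : ℤ) (ha : a ≠ 0) (hb : b ≠ 0) (hc : c ≠ 0)
    (hgcd : Int.gcd a (Int.gcd b c) = 1) (m n : ℕ) (hm : 0 < m) (hn : 0 < n)
    (X Y : Matrix (Fin 2) (Fin 2) ℤ)
    (heq : a • X ^ m + b • Y ^ n = c • (1 : Matrix (Fin 2) (Fin 2) ℤ))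
    (hcomm : X * Y ≠ Y * X) :
    (∃ t : ℤ, X ^ m = t • (1 : Matrix (Fin 2) (Fin 2) ℤ)) ∧
    (∃ s : ℤ, Y ^ n = s • (1 : Matrix (Fin 2) (Fin 2) ℤ)) := by
  obtain ⟨p, q, hX⟩ := pow_lin X m hm
  obtain ⟨r, s, hY⟩ := pow_lin Y n hn
  have key : (a * p) • X + (b * r) • Y = (c - a * q - b * s) • (1 : Matrix (Fin 2) (Fin 2) ℤ) := by
    have := heq
    rw [hX, hY] at this
    rw [smul_add, smul_add] at this
    have h2 : (a * p) • X + (b * r) • Y + (a * q + b * s) • (1 : Matrix (Fin 2) (Fin 2) ℤ)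
        = c • (1 : Matrix (Fin 2) (Fin 2) ℤ) := by
      rw [← this]; module
    have h3 : (a * p) • X + (b * r) • Y
        = c • (1 : Matrix (Fin 2) (Fin 2) ℤ) - (a * q + b * s) • (1 : Matrix (Fin 2) (Fin 2) ℤ) := by
      rw [← h2]; abel
    rw [h3]; module
  have hr : r = 0 := by
    by_contra hr0
    exact hcomm (comm_of_lin (a * p) (b * r) _ (mul_ne_zero hb hr0) X Y key)
  have hp : p = 0 := by
    by_contra hp0
    have key' : (b * r) • Y + (a * p) • X = (c - a * q - b * s) • (1 : Matrix (Fin 2) (Fin 2) ℤ) := by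
      rw [← key]; abel
    exact hcomm (comm_of_lin (b * r) (a * p) _ (mul_ne_zero ha hp0) Y X key').symm
  refine ⟨⟨q, ?_⟩, ⟨s, ?_⟩⟩
  · rw [hX, hp]; simp
  · rw [hY, hr]; simp
end

section
/- Let a, b be nonzero integers, let m, n be positive integers, and let c₁, c₂ be integers with c₁ ≠ c₂. Then X, Y ∈ M₂(ℤ) satisfy aX^m + bY^n = diag(c₁, c₂) and XY = YX if and only if X = diag(x₁, x₂) and Y = diag(y₁, y₂) for some integers x₁, x₂, y₁, y₂ satisfying a·x₁^m + b·y₁^n = c₁ and a·x₂^m + b·y₂^n = c₂. -/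
private lemma diag_pow (x y : ℤ) (m : ℕ) :
    (!![x, 0; 0, y] : Matrix (Fin 2) (Fin 2) ℤ) ^ m = !![x ^ m, 0; 0, y ^ m] := by
  induction m with
  | zero => simp [Matrix.one_fin_two]
  | succ k ih =>
    rw [pow_succ, ih, Matrix.mul_fin_two]
    simp [pow_succ]

private lemma diag_of_comm (c₁ c₂ : ℤ) (hc : c₁ ≠ c₂) (X : Matrix (Fin 2) (Fin 2) ℤ)
    (h : X * !![c₁, 0; 0, c₂] = !![c₁, 0; 0, c₂] * X) :
    ∃ x₁ x₂ : ℤ, X = !![x₁, 0; 0, x₂] := by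
  have h01 := congrArg (fun M => M 0 1) h
  have h10 := congrArg (fun M => M 1 0) h
  simp [Matrix.mul_apply, Fin.sum_univ_two] at h01 h10
  have hs : c₂ - c₁ ≠ 0 := sub_ne_zero.mpr (Ne.symm hc)
  have e01 : X 0 1 = 0 := by
    have : X 0 1 * (c₂ - c₁) = 0 := by linear_combination h01
    rcases mul_eq_zero.mp this with h' | h'
    · exact h'
    · exact absurd h' hs
  have e10 : X 1 0 = 0 := by
    have : X 1 0 * (c₁ - c₂) = 0 := by linear_combination h10
    rcases mul_eq_zero.mp this with h' | h'
    · exact h'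
    · exact absurd h' (sub_ne_zero.mpr hc)
  refine ⟨X 0 0, X 1 1, ?_⟩
  nth_rewrite 1 [Matrix.eta_fin_two X]
  rw [e01, e10]

theorem stmt_1 (a b : ℤ) (ha : a ≠ 0) (hb : b ≠ 0) (m n : ℕ) (hm : 0 < m) (hn : 0 < n)
    (c₁ c₂ : ℤ) (hc : c₁ ≠ c₂) (X Y : Matrix (Fin 2) (Fin 2) ℤ) :
    (a • X ^ m + b • Y ^ n = !![c₁, 0; 0, c₂] ∧ X * Y = Y * X) ↔
    (∃ x₁ x₂ y₁ y₂ : ℤ, X = !![x₁, 0; 0, x₂] ∧ Y = !![y₁, 0; 0, y₂] ∧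
      a * x₁ ^ m + b * y₁ ^ n = c₁ ∧ a * x₂ ^ m + b * y₂ ^ n = c₂) := by
  constructor
  · rintro ⟨heq, hcomm⟩
    have hXm : X * X ^ m = X ^ m * X := ((Commute.refl X).pow_right m).eq
    have hYn : Y * Y ^ n = Y ^ n * Y := ((Commute.refl Y).pow_right n).eq
    have hXYn : X * Y ^ n = Y ^ n * X := ((Commute.pow_right hcomm n)).eq
    have hYXm : Y * X ^ m = X ^ m * Y := (((Commute.symm hcomm)).pow_right m).eq
    have hXD : X * !![c₁, 0; 0, c₂] = !![c₁, 0; 0, c₂] * X := by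
      rw [← heq, mul_add, add_mul, mul_smul_comm, mul_smul_comm, smul_mul_assoc,
        smul_mul_assoc, hXm, hXYn]
    have hYD : Y * !![c₁, 0; 0, c₂] = !![c₁, 0; 0, c₂] * Y := by
      rw [← heq, mul_add, add_mul, mul_smul_comm, mul_smul_comm, smul_mul_assoc,
        smul_mul_assoc, hYn, hYXm]
    obtain ⟨x₁, x₂, hX⟩ := diag_of_comm c₁ c₂ hc X hXD
    obtain ⟨y₁, y₂, hY⟩ := diag_of_comm c₁ c₂ hc Y hYD
    refine ⟨x₁, x₂, y₁, y₂, hX, hY, ?_, ?_⟩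
    · have := congrArg (fun M => M 0 0) heq
      rw [hX, hY] at this
      simpa [diag_pow, Matrix.add_apply, Matrix.smul_apply] using this
    · have := congrArg (fun M => M 1 1) heq
      rw [hX, hY] at this
      simpa [diag_pow, Matrix.add_apply, Matrix.smul_apply] using this
  · rintro ⟨x₁, x₂, y₁, y₂, rfl, rfl, h1, h2⟩
    constructor
    · rw [diag_pow, diag_pow]
      ext i j
      fin_cases i <;> fin_cases j <;>
        simp [Matrix.add_apply, Matrix.smul_apply, h1, h2]
    · rw [Matrix.mul_fin_two, Matrix.mul_fin_two]
      ring_nf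
end

section
/- Let a, b, c be nonzero integers with gcd(a, b, c) = 1. Then X, Y ∈ M₂(ℤ) satisfy aX² + bY² = cI and XY ≠ YX if and only if X = [[t₁, t₂],[t₃, −t₁]] and Y = [[s₁, s₂],[s₃, −s₁]] for some integers t₁, t₂, t₃, s₁, s₂, s₃ such that a(t₁² + t₂t₃) + b(s₁² + s₂s₃) = c and the vectors (t₁, t₂, t₃) and (s₁, s₂, s₃) in ℚ³ are linearly independent over ℚ. -/
/-!
By Cayley–Hamilton, `M ^ 2 = tr M • M - det M • 1` for a `2 × 2` matrix, so `a X² + b Y² = c I`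
says that `(a tr X) X + (b tr Y) Y` is scalar. Commuting this with `X` and with `Y` shows that
`(a tr X)` and `(b tr Y)` annihilate the commutator `XY - YX ≠ 0`, so both traces vanish. For
traceless matrices the equation reads `a (t₁² + t₂t₃) + b (s₁² + s₂s₃) = c`, and the commutator of
two of them is `[[u, 2w], [2v, -u]]` with `(u, v, w)` the cross product of their coefficient
vectors, which vanishes exactly when the vectors are linearly dependent.
-/

open Matrix

namespace Matrix

variable {R : Type*} [CommRing R]

theorem sq_fin_two_eq_trace_smul_sub_det_smul (M : Matrix (Fin 2) (Fin 2) R) :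
    M ^ 2 = M.trace • M - M.det • 1 := by
  rw [eta_fin_two M]
  ext i j
  fin_cases i <;> fin_cases j <;> simp [sq, trace_fin_two, det_fin_two] <;> ring

theorem eq_of_trace_eq_zero {M : Matrix (Fin 2) (Fin 2) R} (h : M.trace = 0) :
    M = !![M 0 0, M 0 1; M 1 0, -M 0 0] := by
  rw [trace_fin_two, add_eq_zero_iff_eq_neg'] at h
  conv_lhs => rw [eta_fin_two M, h]

theorem sq_traceless_fin_two (t₁ t₂ t₃ : R) :
    !![t₁, t₂; t₃, -t₁] ^ 2 = (t₁ ^ 2 + t₂ * t₃) • (1 : Matrix (Fin 2) (Fin 2) R) := by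
  ext i j
  fin_cases i <;> fin_cases j <;> simp [sq] <;> ring

theorem eq_zero_and_eq_zero_of_smul_add_smul_eq_smul_one [NoZeroDivisors R] {n : Type*}
    [Fintype n] [DecidableEq n] {X Y : Matrix n n R} (hXY : ¬Commute X Y) {p q μ : R}
    (h : p • X + q • Y = μ • 1) : p = 0 ∧ q = 0 := by
  have hcomm : X * Y - Y * X ≠ 0 := sub_ne_zero.mpr hXY
  have hq : q • (X * Y - Y * X) = 0 := by
    have := congrArg (fun M => X * M - M * X) h
    simp only [mul_add, add_mul, mul_smul_comm, smul_mul_assoc, mul_one, one_mul, sub_self] at this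
    rw [smul_sub, ← this]
    abel
  have hp : p • (X * Y - Y * X) = 0 := by
    have := congrArg (fun M => M * Y - Y * M) h
    simp only [mul_add, add_mul, mul_smul_comm, smul_mul_assoc, mul_one, one_mul, sub_self] at this
    rw [smul_sub, ← this]
    abel
  exact ⟨(smul_eq_zero.mp hp).resolve_right hcomm, (smul_eq_zero.mp hq).resolve_right hcomm⟩

theorem trace_eq_zero_of_smul_sq_add_smul_sq_eq_smul_one [NoZeroDivisors R] {a b c : R}
    (ha : a ≠ 0) (hb : b ≠ 0) {X Y : Matrix (Fin 2) (Fin 2) R} (hXY : ¬Commute X Y)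
    (h : a • X ^ 2 + b • Y ^ 2 = c • 1) : X.trace = 0 ∧ Y.trace = 0 := by
  rw [sq_fin_two_eq_trace_smul_sub_det_smul, sq_fin_two_eq_trace_smul_sub_det_smul] at h
  have hscalar : (a * X.trace) • X + (b * Y.trace) • Y = (c + a * X.det + b * Y.det) • 1 := by
    rw [← sub_eq_zero, ← sub_eq_zero.mpr h]
    module
  obtain ⟨hX, hY⟩ := eq_zero_and_eq_zero_of_smul_add_smul_eq_smul_one hXY hscalar
  exact ⟨(mul_eq_zero.mp hX).resolve_left ha, (mul_eq_zero.mp hY).resolve_left hb⟩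

theorem smul_sq_traceless_add_smul_sq_traceless_eq_smul_one_iff [IsDomain R]
    (a b c t₁ t₂ t₃ s₁ s₂ s₃ : R) :
    a • !![t₁, t₂; t₃, -t₁] ^ 2 + b • !![s₁, s₂; s₃, -s₁] ^ 2 = c • 1 ↔
      a * (t₁ ^ 2 + t₂ * t₃) + b * (s₁ ^ 2 + s₂ * s₃) = c := by
  rw [sq_traceless_fin_two, sq_traceless_fin_two, smul_smul, smul_smul, ← add_smul]
  exact (smul_left_injective R one_ne_zero).eq_iff

theorem commute_traceless_iff_crossProduct_eq_zero [NoZeroDivisors R] [NeZero (2 : R)]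
    (t₁ t₂ t₃ s₁ s₂ s₃ : R) :
    Commute !![t₁, t₂; t₃, -t₁] !![s₁, s₂; s₃, -s₁] ↔
      crossProduct ![t₁, t₂, t₃] ![s₁, s₂, s₃] = 0 := by
  set w := crossProduct ![t₁, t₂, t₃] ![s₁, s₂, s₃]
  have hcomm :
      !![t₁, t₂; t₃, -t₁] * !![s₁, s₂; s₃, -s₁] - !![s₁, s₂; s₃, -s₁] * !![t₁, t₂; t₃, -t₁] =
        !![w 0, 2 * w 2; 2 * w 1, -w 0] := by
    ext i j
    fin_cases i <;> fin_cases j <;> simp [w, cross_apply] <;> ring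
  rw [commute_iff_eq, ← sub_eq_zero, hcomm, ← Matrix.ext_iff, funext_iff]
  simp [Fin.forall_fin_succ, two_ne_zero (α := R)]
  tauto

theorem not_commute_traceless_iff_linearIndependent {K : Type*} [Field K] [NeZero (2 : K)]
    {f : R →+* K} (hf : Function.Injective f) (t₁ t₂ t₃ s₁ s₂ s₃ : R) :
    ¬Commute !![t₁, t₂; t₃, -t₁] !![s₁, s₂; s₃, -s₁] ↔
      LinearIndependent K ![![f t₁, f t₂, f t₃], ![f s₁, f s₂, f s₃]] := by
  have hmap (u₁ u₂ u₃ : R) : f.mapMatrix !![u₁, u₂; u₃, -u₁] = !![f u₁, f u₂; f u₃, -f u₁] := by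
    ext i j
    fin_cases i <;> fin_cases j <;> simp
  rw [← crossProduct_ne_zero_iff_linearIndependent, Ne,
    ← commute_traceless_iff_crossProduct_eq_zero, ← hmap, ← hmap,
    commute_map_iff (f := f.mapMatrix) (map_injective hf)]

end Matrix

theorem stmt_4_general (a b c : ℤ) (ha : a ≠ 0) (hb : b ≠ 0) (X Y : Matrix (Fin 2) (Fin 2) ℤ) :
    (a • X ^ 2 + b • Y ^ 2 = c • (1 : Matrix (Fin 2) (Fin 2) ℤ) ∧ X * Y ≠ Y * X) ↔
    (∃ t₁ t₂ t₃ s₁ s₂ s₃ : ℤ,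
      X = !![t₁, t₂; t₃, -t₁] ∧ Y = !![s₁, s₂; s₃, -s₁] ∧
      a * (t₁ ^ 2 + t₂ * t₃) + b * (s₁ ^ 2 + s₂ * s₃) = c ∧
      LinearIndependent ℚ
        ![![(t₁ : ℚ), (t₂ : ℚ), (t₃ : ℚ)], ![(s₁ : ℚ), (s₂ : ℚ), (s₃ : ℚ)]]) := by
  have hcast : Function.Injective (Int.castRingHom ℚ) := Int.cast_injective
  constructor
  · rintro ⟨h, hXY⟩
    obtain ⟨hX, hY⟩ := trace_eq_zero_of_smul_sq_add_smul_sq_eq_smul_one ha hb hXY h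
    rw [eq_of_trace_eq_zero hX, eq_of_trace_eq_zero hY] at h hXY
    refine ⟨X 0 0, X 0 1, X 1 0, Y 0 0, Y 0 1, Y 1 0, eq_of_trace_eq_zero hX,
      eq_of_trace_eq_zero hY, ?_, ?_⟩
    · exact (smul_sq_traceless_add_smul_sq_traceless_eq_smul_one_iff ..).mp h
    · exact (not_commute_traceless_iff_linearIndependent hcast ..).mp hXY
  · rintro ⟨t₁, t₂, t₃, s₁, s₂, s₃, rfl, rfl, hsum, hli⟩
    exact ⟨(smul_sq_traceless_add_smul_sq_traceless_eq_smul_one_iff ..).mpr hsum,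
      (not_commute_traceless_iff_linearIndependent hcast ..).mpr hli⟩

theorem stmt_4 (a b c : ℤ) (ha : a ≠ 0) (hb : b ≠ 0) (hc : c ≠ 0)
    (hgcd : Int.gcd a (Int.gcd b c) = 1) (X Y : Matrix (Fin 2) (Fin 2) ℤ) :
    (a • X ^ 2 + b • Y ^ 2 = c • (1 : Matrix (Fin 2) (Fin 2) ℤ) ∧ X * Y ≠ Y * X) ↔
    (∃ t₁ t₂ t₃ s₁ s₂ s₃ : ℤ,
      X = !![t₁, t₂; t₃, -t₁] ∧ Y = !![s₁, s₂; s₃, -s₁] ∧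
      a * (t₁ ^ 2 + t₂ * t₃) + b * (s₁ ^ 2 + s₂ * s₃) = c ∧
      LinearIndependent ℚ
        ![![(t₁ : ℚ), (t₂ : ℚ), (t₃ : ℚ)], ![(s₁ : ℚ), (s₂ : ℚ), (s₃ : ℚ)]]) :=
  stmt_4_general a b c ha hb X Y
end

section
/- Let a, b, c be nonzero integers with gcd(a, b, c) = 1 and let m, n be positive integers. If X, Y ∈ M₂(ℤ) satisfy aX^m + bY^n = cI, then there exist complex numbers x₁, x₂ which are the eigenvalues of X (with multiplicity) and complex numbers y₁, y₂ which are the eigenvalues of Y (with multiplicity) such that a·x₁^m + b·y₁^n = c and a·x₂^m + b·y₂^n = c. -/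
/-!
By Cayley–Hamilton, every power of a 2×2 matrix is an affine function of it, `M ^ k = u • M + v • 1`,
and the same `u, v` give `z ^ k = u * z + v` for each eigenvalue `z`. So the relation becomes
`α • X + β • Y = d • 1`. If `β ≠ 0`, then `Y` is an affine function of `X` and its eigenvalues are
the corresponding affine images of those of `X`; if `β = 0`, then `α • X = d • 1` forces `α x = d` for
both eigenvalues `x` of `X`, and the eigenvalues of `Y` may be paired with them in any order.
-/

open Polynomial

namespace Matrix

section CommRing

variable {R : Type*} [CommRing R] [Nontrivial R]

theorem charpoly_fin_two_eq_X_sub_C_mul_X_sub_C_iff (M : Matrix (Fin 2) (Fin 2) R) {x₁ x₂ : R} :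
    M.charpoly = (X - C x₁) * (X - C x₂) ↔ x₁ + x₂ = M.trace ∧ x₁ * x₂ = M.det := by
  have hprod : (X - C x₁) * (X - C x₂) = X ^ 2 - C (x₁ + x₂) * X + C (x₁ * x₂) := by
    simp only [map_add, map_mul]; ring
  rw [charpoly_fin_two, hprod]
  constructor
  · intro h
    have h₁ : -M.trace = -x₂ + -x₁ := by simpa using congrArg (coeff · 1) h
    exact ⟨by linear_combination h₁, by simpa using (congrArg (coeff · 0) h).symm⟩
  · rintro ⟨htr, hdet⟩
    rw [htr, hdet]

theorem charpoly_smul_add_smul_one {M : Matrix (Fin 2) (Fin 2) R} {x₁ x₂ : R}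
    (hM : M.charpoly = (X - C x₁) * (X - C x₂)) (r s : R) :
    (r • M + s • 1).charpoly = (X - C (r * x₁ + s)) * (X - C (r * x₂ + s)) := by
  rw [charpoly_fin_two_eq_X_sub_C_mul_X_sub_C_iff] at hM ⊢
  obtain ⟨htr, hdet⟩ := hM
  simp only [trace_fin_two, det_fin_two, trace_add, trace_smul, trace_one, Fintype.card_fin,
    Nat.cast_ofNat, add_apply, smul_apply, smul_eq_mul, one_apply_eq, mul_one, ne_eq,
    zero_ne_one, one_ne_zero, not_false_eq_true, one_apply_ne, mul_zero, add_zero] at htr hdet ⊢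
  constructor
  · linear_combination r * htr
  · linear_combination r * s * htr + r ^ 2 * hdet

theorem exists_aeval_eq_smul_add_smul_one (M : Matrix (Fin 2) (Fin 2) R) (p : R[X]) :
    ∃ u v : R, aeval M p = u • M + v • 1 ∧ ∀ z, M.charpoly.IsRoot z → p.eval z = u * z + v := by
  have hdeg : (p %ₘ M.charpoly).natDegree ≤ 1 := by
    have hne : M.charpoly ≠ 1 := fun h => by simpa [h] using M.charpoly_natDegree_eq_dim
    have := natDegree_modByMonic_lt p M.charpoly_monic hne
    simp only [charpoly_natDegree_eq_dim, Fintype.card_fin] at this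
    omega
  obtain ⟨u, v, hrem⟩ : ∃ u v, p %ₘ M.charpoly = C u * X + C v :=
    ⟨_, _, eq_X_add_C_of_natDegree_le_one hdeg⟩
  refine ⟨u, v, ?_, fun z hz => ?_⟩
  · rw [← aeval_modByMonic_eq_self_of_root M.aeval_self_charpoly, hrem]
    simp [Algebra.algebraMap_eq_smul_one]
  · rw [← coe_aeval_eq_eval, ← aeval_modByMonic_eq_self_of_root (by simpa using hz), hrem]
    simp

end CommRing

theorem mul_add_eq_zero_of_charpoly_of_smul_add_smul_one_eq_zero {R : Type*} [CommRing R]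
    [IsDomain R] {M : Matrix (Fin 2) (Fin 2) R} {x₁ x₂ : R}
    (hM : M.charpoly = (X - C x₁) * (X - C x₂)) {r s : R} (h : r • M + s • 1 = 0) :
    r * x₁ + s = 0 ∧ r * x₂ + s = 0 := by
  have h0 := charpoly_smul_add_smul_one hM r s
  rw [h, charpoly_zero, Fintype.card_fin] at h0
  constructor
  · simpa using congrArg (eval (r * x₁ + s)) h0
  · simpa using congrArg (eval (r * x₂ + s)) h0

section IsAlgClosed

variable {K : Type*} [Field K] [IsAlgClosed K]

theorem exists_charpoly_fin_two_eq_X_sub_C_mul_X_sub_C (M : Matrix (Fin 2) (Fin 2) K) :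
    ∃ x₁ x₂, M.charpoly = (X - C x₁) * (X - C x₂) := by
  obtain ⟨x, hx⟩ := IsAlgClosed.exists_root M.charpoly (by simp [charpoly_degree_eq_dim])
  refine ⟨x, M.trace - x, (M.charpoly_fin_two_eq_X_sub_C_mul_X_sub_C_iff).2 ⟨by ring, ?_⟩⟩
  rw [IsRoot, charpoly_fin_two] at hx
  simp only [eval_add, eval_sub, eval_pow, eval_X, eval_mul, eval_C] at hx
  linear_combination -hx

theorem exists_charpoly_eq_of_smul_add_smul_eq_smul_one {M N : Matrix (Fin 2) (Fin 2) K}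
    {x₁ x₂ α β d : K} (hM : M.charpoly = (X - C x₁) * (X - C x₂))
    (h : α • M + β • N = d • 1) :
    ∃ y₁ y₂, N.charpoly = (X - C y₁) * (X - C y₂) ∧ α * x₁ + β * y₁ = d ∧ α * x₂ + β * y₂ = d := by
  by_cases hβ : β = 0
  · obtain ⟨y₁, y₂, hN⟩ := N.exists_charpoly_fin_two_eq_X_sub_C_mul_X_sub_C
    have hMd : α • M + (-d) • (1 : Matrix (Fin 2) (Fin 2) K) = 0 := by
      subst hβ; linear_combination (norm := module) h
    obtain ⟨h₁, h₂⟩ := mul_add_eq_zero_of_charpoly_of_smul_add_smul_one_eq_zero hM hMd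
    exact ⟨y₁, y₂, hN, by linear_combination h₁ + y₁ * hβ, by linear_combination h₂ + y₂ * hβ⟩
  · have hN : N = (-α / β) • M + (d / β) • 1 :=
      calc N = β⁻¹ • (β • N) := (inv_smul_smul₀ hβ N).symm
        _ = β⁻¹ • (d • 1 - α • M) := by rw [← h, add_sub_cancel_left]
        _ = _ := by module
    refine ⟨_, _, hN ▸ charpoly_smul_add_smul_one hM _ _, ?_, ?_⟩ <;> field_simp <;> ring

end IsAlgClosed

end Matrix

open Polynomial in
theorem stmt_6_general (a b c : ℤ) (m n : ℕ)
    (X Y : Matrix (Fin 2) (Fin 2) ℤ)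
    (heq : a • X ^ m + b • Y ^ n = c • (1 : Matrix (Fin 2) (Fin 2) ℤ)) :
    ∃ x₁ x₂ y₁ y₂ : ℂ,
      (X.map (Int.cast : ℤ → ℂ)).charpoly = (Polynomial.X - C x₁) * (Polynomial.X - C x₂) ∧
      (Y.map (Int.cast : ℤ → ℂ)).charpoly = (Polynomial.X - C y₁) * (Polynomial.X - C y₂) ∧
      (a : ℂ) * x₁ ^ m + (b : ℂ) * y₁ ^ n = (c : ℂ) ∧
      (a : ℂ) * x₂ ^ m + (b : ℂ) * y₂ ^ n = (c : ℂ) := by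
  set X' := X.map (Int.cast : ℤ → ℂ)
  set Y' := Y.map (Int.cast : ℤ → ℂ)
  have heqℂ : (a : ℂ) • X' ^ m + (b : ℂ) • Y' ^ n = (c : ℂ) • 1 := by
    have h := congrArg (Int.castRingHom ℂ).mapMatrix heq
    simp only [map_add, map_zsmul, map_pow, map_one, ← Int.cast_smul_eq_zsmul ℂ] at h
    exact h
  obtain ⟨u, v, hXm, hx⟩ := X'.exists_aeval_eq_smul_add_smul_one (Polynomial.X ^ m)
  obtain ⟨u', v', hYn, hy⟩ := Y'.exists_aeval_eq_smul_add_smul_one (Polynomial.X ^ n)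
  simp only [aeval_X_pow, eval_pow, eval_X] at hXm hYn hx hy
  have hlin : ((a : ℂ) * u) • X' + ((b : ℂ) * u') • Y' = ((c : ℂ) - a * v - b * v') • 1 := by
    rw [hXm, hYn] at heqℂ
    linear_combination (norm := module) heqℂ
  obtain ⟨x₁, x₂, hX⟩ := X'.exists_charpoly_fin_two_eq_X_sub_C_mul_X_sub_C
  obtain ⟨y₁, y₂, hY, h₁, h₂⟩ := Matrix.exists_charpoly_eq_of_smul_add_smul_eq_smul_one hX hlin
  refine ⟨x₁, x₂, y₁, y₂, hX, hY, ?_, ?_⟩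
  · rw [hx x₁ (by simp [hX]), hy y₁ (by simp [hY])]; linear_combination h₁
  · rw [hx x₂ (by simp [hX]), hy y₂ (by simp [hY])]; linear_combination h₂

open Polynomial in
theorem stmt_6 (a b c : ℤ) (ha : a ≠ 0) (hb : b ≠ 0) (hc : c ≠ 0)
    (hgcd : Int.gcd a (Int.gcd b c) = 1) (m n : ℕ) (hm : 0 < m) (hn : 0 < n)
    (X Y : Matrix (Fin 2) (Fin 2) ℤ)
    (heq : a • X ^ m + b • Y ^ n = c • (1 : Matrix (Fin 2) (Fin 2) ℤ)) :
    ∃ x₁ x₂ y₁ y₂ : ℂ,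
      (X.map (Int.cast : ℤ → ℂ)).charpoly = (Polynomial.X - C x₁) * (Polynomial.X - C x₂) ∧
      (Y.map (Int.cast : ℤ → ℂ)).charpoly = (Polynomial.X - C y₁) * (Polynomial.X - C y₂) ∧
      (a : ℂ) * x₁ ^ m + (b : ℂ) * y₁ ^ n = (c : ℂ) ∧
      (a : ℂ) * x₂ ^ m + (b : ℂ) * y₂ ^ n = (c : ℂ) :=
  stmt_6_general a b c m n X Y heq
end

section
/- Let a, b, c be nonzero integers such that −ab is not a perfect square and gcd(a, b, c) = 1. Then X, Y ∈ M₂(ℤ) satisfy aX² + bY² = cI and XY = YX if and only if one of the following holds: (i) X = t₁I and Y = t₂I for integers t₁, t₂ with a·t₁² + b·t₂² = c; (ii) X = t₁I and Y = [[t₄, t₂],[t₃, −t₄]] for integers t₁, t₂, t₃, t₄ with a·t₁² + b(t₄² + t₂t₃) = c; (iii) there exist integers t₁, t₂, t₃, t₄, u, v, k with u ≠ c, g = gcd(va, u − c), such that X = t₁I + ((u − c)/g)·[[0, t₂],[t₃, −k]] and Y = t₄I + (va/g)·[[0, t₂],[t₃, −k]], and the relations u² + abv² = c², g²(a·t₁²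 + b·t₄²) + 2ac·t₂t₃·(c − u) = c·g², and (g·t₁ + c·k)(u − c) + v·b·g·t₄ = 0 all hold. -/
/-!
Commuting 2 × 2 matrices are polynomials in a common matrix: their trace-free parts
`(X₀₁, X₁₀, X₁₁ - X₀₀)` and `(Y₀₁, Y₁₀, Y₁₁ - Y₀₀)` are parallel, so over `ℤ` we can write
`X = x I + p N` and `Y = y I + q N` with `N₀₀ = 0` and `p, q` coprime. By Cayley–Hamilton
`N² = N₁₁ N + N₀₁ N₁₀ I`, so `a X² + b Y² = c I` splits into two scalar equations involving
`D = a p² + b q²`, which is nonzero when `p ≠ 0` because `-ab` is not a square.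
If `X` is scalar (`p = 0`) the second equation forces `Y` to be trace-free. Otherwise
`(u, v) = c (b q² - a p², -2 p q) / D` is the rational point of the conic `u² + a b v² = c²`
attached to `(p : q)`; coprimality makes `g = -2acp / D` and `v` integers, and after fixing
the sign of `g` we get `g = gcd (v a, u - c)` with `(u - c) / g = p` and `v a / g = q`.
-/

theorem Int.exists_isCoprime_smul_of_mul_eq_mul {ι : Type*} (A B : ι → ℤ)
    (h : ∀ i j, A i * B j = A j * B i) :
    ∃ (p q : ℤ) (n : ι → ℤ), IsCoprime p q ∧ A = p • n ∧ B = q • n := by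
  by_cases hA : A = 0
  · exact ⟨0, 1, B, isCoprime_zero_left.mpr isUnit_one, by simp [hA], by simp⟩
  obtain ⟨j, hj⟩ := Function.ne_iff.mp hA
  obtain ⟨d, p, q, hd, hpq, hAj, hBj⟩ :=
    Int.exists_gcd_one' (Int.gcd_pos_of_ne_zero_left (B j) hj)
  replace hpq : IsCoprime p q := Int.isCoprime_iff_gcd_eq_one.mpr hpq
  have hp : p ≠ 0 := by rintro rfl; exact hj (by simpa using hAj)
  have hpB : ∀ i, p * B i = q * A i := fun i =>
    mul_left_cancel₀ (Int.natCast_ne_zero.mpr hd.ne') <| by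
      have := h j i
      rw [hAj, hBj] at this
      linear_combination this
  have hpA : ∀ i, p ∣ A i := fun i => hpq.dvd_of_dvd_mul_left ⟨B i, (hpB i).symm⟩
  refine ⟨p, q, fun i => A i / p, hpq, funext fun i => (Int.mul_ediv_cancel' (hpA i)).symm,
    funext fun i => mul_left_cancel₀ hp ?_⟩
  simp only [Pi.smul_apply, smul_eq_mul]
  rw [hpB i, mul_left_comm, Int.mul_ediv_cancel' (hpA i)]

theorem Int.mul_sq_add_mul_sq_ne_zero {a b p : ℤ} (q : ℤ) (hnsq : ¬ ∃ s : ℤ, -(a * b) = s ^ 2)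
    (hp : p ≠ 0) : a * p ^ 2 + b * q ^ 2 ≠ 0 := by
  intro h
  have hsq : (b * q) ^ 2 = -(a * b) * p ^ 2 := by linear_combination b * h
  have hdvd : p ^ 2 ∣ (b * q) ^ 2 := ⟨-(a * b), by rw [hsq]; ring⟩
  obtain ⟨s, hs⟩ := (Int.pow_dvd_pow_iff two_ne_zero).mp hdvd
  exact hnsq ⟨s, mul_right_cancel₀ (pow_ne_zero 2 hp) (by rw [← hsq, hs]; ring)⟩

namespace Matrix

variable {R : Type*} [CommRing R]

theorem commute_smul_one_add_smul {n : Type*} [Fintype n] [DecidableEq n]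
    (x y p q : R) (N : Matrix n n R) :
    Commute (x • (1 : Matrix n n R) + p • N) (y • 1 + q • N) := by
  simp only [Commute, SemiconjBy, add_mul, mul_add, Matrix.smul_mul, Matrix.mul_smul, smul_smul,
    Matrix.one_mul, Matrix.mul_one]
  match_scalars <;> ring

theorem eq_smul_one_add_smul_iff {M : Matrix (Fin 2) (Fin 2) R} {x p n₁ n₂ n₃ : R} :
    M = x • (1 : Matrix (Fin 2) (Fin 2) R) + p • !![0, n₁; n₂, n₃] ↔
      M 0 0 = x ∧ M 0 1 = p * n₁ ∧ M 1 0 = p * n₂ ∧ M 1 1 = x + p * n₃ := by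
  simp only [← Matrix.ext_iff, Fin.forall_fin_two, add_apply, smul_apply, one_apply_eq,
    one_apply_ne, ne_eq, zero_ne_one, one_ne_zero, not_false_eq_true, smul_eq_mul]
  simp [and_assoc]

theorem smul_one_add_smul_eq_smul_one_iff [IsDomain R] {α β c n₁ n₂ n₃ : R} :
    α • (1 : Matrix (Fin 2) (Fin 2) R) + β • !![0, n₁; n₂, n₃] = c • 1 ↔
      α = c ∧ (β = 0 ∨ n₁ = 0 ∧ n₂ = 0 ∧ n₃ = 0) := by
  rw [eq_comm, eq_smul_one_add_smul_iff]
  simp only [smul_apply, one_apply_eq, one_apply_ne, ne_eq, zero_ne_one, one_ne_zero,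
    not_false_eq_true, smul_eq_mul, mul_one, mul_zero]
  constructor
  · rintro ⟨rfl, h₁, h₂, h₃⟩
    refine ⟨rfl, or_iff_not_imp_left.mpr fun hβ => ?_⟩
    simp_all
  · rintro ⟨rfl, rfl | ⟨rfl, rfl, rfl⟩⟩ <;> simp

theorem smul_sq_add_smul_sq_eq (a b x y p q n₁ n₂ n₃ : R) :
    a • (x • (1 : Matrix (Fin 2) (Fin 2) R) + p • !![0, n₁; n₂, n₃]) ^ 2
        + b • (y • 1 + q • !![0, n₁; n₂, n₃]) ^ 2
      = (a * x ^ 2 + b * y ^ 2 + (a * p ^ 2 + b * q ^ 2) * n₁ * n₂) • 1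
        + (2 * (a * x * p + b * y * q) + (a * p ^ 2 + b * q ^ 2) * n₃) • !![0, n₁; n₂, n₃] := by
  have hN : !![0, n₁; n₂, n₃] * !![0, n₁; n₂, n₃]
      = n₃ • !![0, n₁; n₂, n₃] + (n₁ * n₂) • (1 : Matrix (Fin 2) (Fin 2) R) := by
    ext i j
    fin_cases i <;> fin_cases j <;> simp <;> ring
  simp only [sq, add_mul, mul_add, Matrix.smul_mul, Matrix.mul_smul, Matrix.one_mul,
    Matrix.mul_one, hN]
  match_scalars <;> ring

theorem smul_sq_add_smul_sq_eq_smul_one_iff [IsDomain R] {a b c x y p q n₁ n₂ n₃ : R} :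
    a • (x • (1 : Matrix (Fin 2) (Fin 2) R) + p • !![0, n₁; n₂, n₃]) ^ 2
        + b • (y • 1 + q • !![0, n₁; n₂, n₃]) ^ 2 = c • 1 ↔
      a * x ^ 2 + b * y ^ 2 + (a * p ^ 2 + b * q ^ 2) * n₁ * n₂ = c ∧
        (2 * (a * x * p + b * y * q) + (a * p ^ 2 + b * q ^ 2) * n₃ = 0 ∨
          n₁ = 0 ∧ n₂ = 0 ∧ n₃ = 0) := by
  rw [smul_sq_add_smul_sq_eq, smul_one_add_smul_eq_smul_one_iff]

theorem smul_sq_add_smul_sq_eq_smul_one_and_mul_comm [IsDomain R] {a b c x y p q n₁ n₂ n₃ : R}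
    (h₁ : a * x ^ 2 + b * y ^ 2 + (a * p ^ 2 + b * q ^ 2) * n₁ * n₂ = c)
    (h₂ : 2 * (a * x * p + b * y * q) + (a * p ^ 2 + b * q ^ 2) * n₃ = 0) :
    a • (x • (1 : Matrix (Fin 2) (Fin 2) R) + p • !![0, n₁; n₂, n₃]) ^ 2
        + b • (y • 1 + q • !![0, n₁; n₂, n₃]) ^ 2 = c • 1 ∧
      (x • (1 : Matrix (Fin 2) (Fin 2) R) + p • !![0, n₁; n₂, n₃])
        * (y • 1 + q • !![0, n₁; n₂, n₃])
        = (y • 1 + q • !![0, n₁; n₂, n₃]) * (x • 1 + p • !![0, n₁; n₂, n₃]) :=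
  ⟨smul_sq_add_smul_sq_eq_smul_one_iff.mpr ⟨h₁, .inl h₂⟩, commute_smul_one_add_smul x y p q _⟩

theorem exists_eq_smul_one_add_smul_of_mul_comm {X Y : Matrix (Fin 2) (Fin 2) ℤ}
    (h : X * Y = Y * X) :
    ∃ x y p q n₁ n₂ n₃ : ℤ, IsCoprime p q ∧
      X = x • (1 : Matrix (Fin 2) (Fin 2) ℤ) + p • !![0, n₁; n₂, n₃] ∧
      Y = y • (1 : Matrix (Fin 2) (Fin 2) ℤ) + q • !![0, n₁; n₂, n₃] := by
  have h₀₀ := congrFun (congrFun h 0) 0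
  have h₀₁ := congrFun (congrFun h 0) 1
  have h₁₀ := congrFun (congrFun h 1) 0
  simp only [mul_apply, Fin.sum_univ_two] at h₀₀ h₀₁ h₁₀
  obtain ⟨p, q, n, hpq, hX, hY⟩ := Int.exists_isCoprime_smul_of_mul_eq_mul
    ![X 0 1, X 1 0, X 1 1 - X 0 0] ![Y 0 1, Y 1 0, Y 1 1 - Y 0 0] <| by
      intro i j
      fin_cases i <;> fin_cases j <;> simp <;> linarith
  have hX₀ := congrFun hX 0
  have hX₁ := congrFun hX 1
  have hX₂ := congrFun hX 2
  have hY₀ := congrFun hY 0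
  have hY₁ := congrFun hY 1
  have hY₂ := congrFun hY 2
  simp at hX₀ hX₁ hX₂ hY₀ hY₁ hY₂
  exact ⟨X 0 0, Y 0 0, p, q, n 0, n 1, n 2, hpq,
    eq_smul_one_add_smul_iff.mpr ⟨rfl, hX₀, hX₁, by linarith⟩,
    eq_smul_one_add_smul_iff.mpr ⟨rfl, hY₀, hY₁, by linarith⟩⟩

end Matrix

section Classification

variable {a b c x y p q n₁ n₂ n₃ g : ℤ}

theorem exists_family_ii (hb : b ≠ 0) (hq : IsCoprime 0 q)
    (h₁ : a * x ^ 2 + b * y ^ 2 + (a * 0 ^ 2 + b * q ^ 2) * n₁ * n₂ = c)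
    (h₂ : 2 * (a * x * 0 + b * y * q) + (a * 0 ^ 2 + b * q ^ 2) * n₃ = 0) :
    ∃ t₁ t₂ t₃ t₄ : ℤ,
      x • (1 : Matrix (Fin 2) (Fin 2) ℤ) + (0 : ℤ) • !![0, n₁; n₂, n₃]
        = t₁ • (1 : Matrix (Fin 2) (Fin 2) ℤ) ∧
      y • (1 : Matrix (Fin 2) (Fin 2) ℤ) + q • !![0, n₁; n₂, n₃] = !![t₄, t₂; t₃, -t₄] ∧
      a * t₁ ^ 2 + b * (t₄ ^ 2 + t₂ * t₃) = c := by
  have hq₀ : q ≠ 0 := (isCoprime_zero_left.mp hq).ne_zero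
  have htr : 2 * y + q * n₃ = 0 := by
    refine (mul_eq_zero.mp ?_).resolve_left (mul_ne_zero hb hq₀)
    linear_combination h₂
  refine ⟨x, q * n₁, q * n₂, y, by simp, ?_, by linear_combination h₁⟩
  exact (Matrix.eq_smul_one_add_smul_iff.mpr ⟨by simp, by simp, by simp, by simp; linarith⟩).symm

theorem exists_conic_point_of_isCoprime (hpq : IsCoprime p q) (hD : a * p ^ 2 + b * q ^ 2 ≠ 0)
    (h₁ : a * x ^ 2 + b * y ^ 2 + (a * p ^ 2 + b * q ^ 2) * n₁ * n₂ = c)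
    (h₂ : 2 * (a * x * p + b * y * q) + (a * p ^ 2 + b * q ^ 2) * n₃ = 0) :
    ∃ g v : ℤ, g * (a * p ^ 2 + b * q ^ 2) = -(2 * a * c * p) ∧ v * a = q * g := by
  obtain ⟨V, hV⟩ : a * p ^ 2 + b * q ^ 2 ∣ 2 * c * p * q :=
    ⟨2 * p * q * n₁ * n₂ - 2 * x * y - n₃ * (q * x + p * y), by
      linear_combination (-2 * p * q) * h₁ + (q * x + p * y) * h₂⟩
  -- by `h₂`, `D` divides both `p` and `q` times `2ab(py - qx)`
  obtain ⟨W, hW⟩ : a * p ^ 2 + b * q ^ 2 ∣ 2 * a * b * (p * y - q * x) := by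
    obtain ⟨α, β, hαβ⟩ := hpq
    exact ⟨α * (2 * b * y + b * q * n₃) - β * (a * p * n₃ + 2 * a * x), by
      linear_combination (-(2 * a * b * (p * y - q * x))) * hαβ + (β * a * p - α * b * q) * h₂⟩
  have hg : (a * x * n₃ - 2 * a * p * n₁ * n₂ - y * W) * (a * p ^ 2 + b * q ^ 2)
      = -(2 * a * c * p) := by
    linear_combination (-(2 * a * p)) * h₁ + (a * x) * h₂ + y * hW
  refine ⟨_, -V, hg, mul_right_cancel₀ hD ?_⟩
  linear_combination a * hV - q * hg

theorem exists_family_iii (ha : a ≠ 0) (hc : c ≠ 0) (hnsq : ¬ ∃ s : ℤ, -(a * b) = s ^ 2)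
    (hp : p ≠ 0) (hpq : IsCoprime p q)
    (h₁ : a * x ^ 2 + b * y ^ 2 + (a * p ^ 2 + b * q ^ 2) * n₁ * n₂ = c)
    (h₂ : 2 * (a * x * p + b * y * q) + (a * p ^ 2 + b * q ^ 2) * n₃ = 0) :
    ∃ t₁ t₂ t₃ t₄ u v k g : ℤ, u ≠ c ∧ g = Int.gcd (v * a) (u - c) ∧
      x • (1 : Matrix (Fin 2) (Fin 2) ℤ) + p • !![0, n₁; n₂, n₃]
        = t₁ • (1 : Matrix (Fin 2) (Fin 2) ℤ) + ((u - c) / g) • !![0, t₂; t₃, -k] ∧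
      y • (1 : Matrix (Fin 2) (Fin 2) ℤ) + q • !![0, n₁; n₂, n₃]
        = t₄ • (1 : Matrix (Fin 2) (Fin 2) ℤ) + ((v * a) / g) • !![0, t₂; t₃, -k] ∧
      u ^ 2 + a * b * v ^ 2 = c ^ 2 ∧
      g ^ 2 * (a * t₁ ^ 2 + b * t₄ ^ 2) + 2 * a * c * t₂ * t₃ * (c - u) = c * g ^ 2 ∧
      (g * t₁ + c * k) * (u - c) + v * b * g * t₄ = 0 := by
  obtain ⟨g, v, hg, hv⟩ :=
    exists_conic_point_of_isCoprime hpq (Int.mul_sq_add_mul_sq_ne_zero q hnsq hp) h₁ h₂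
  have hg₀ : g ≠ 0 := by
    rintro rfl
    simp [ha, hc, hp] at hg
  -- negating `p`, `q`, `N` and `g` changes neither the matrices nor `v`
  wlog hg_pos : 0 < g generalizing p q n₁ n₂ n₃ g
  · have hflip : ∀ r : ℤ, (-r) • !![0, -n₁; -n₂, -n₃] = r • !![0, n₁; n₂, n₃] := fun r => by
      ext i j
      fin_cases i <;> fin_cases j <;> simp
    simpa only [hflip] using this (p := -p) (q := -q) (n₁ := -n₁) (n₂ := -n₂) (n₃ := -n₃)
      (neg_ne_zero.mpr hp) hpq.neg_neg (by linear_combination h₁) (by linear_combination -h₂)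
      (-g) (by linear_combination -hg) (by linear_combination hv) (neg_ne_zero.mpr hg₀)
      (by omega)
  refine ⟨x, n₁, n₂, y, c + p * g, v, -n₃, g, by simpa using mul_ne_zero hp hg₀,
    ?_, ?_, ?_, ?_, ?_, ?_⟩
  · rw [add_sub_cancel_left, hv, Int.gcd_mul_right, Int.isCoprime_iff_gcd_eq_one.mp hpq.symm]
    simp [abs_of_pos hg_pos]
  · rw [add_sub_cancel_left, Int.mul_ediv_cancel _ hg₀, neg_neg]
  · rw [hv, Int.mul_ediv_cancel _ hg₀, neg_neg]
  · refine mul_left_cancel₀ ha ?_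
    linear_combination g * hg + b * (v * a + q * g) * hv
  · linear_combination g ^ 2 * h₁ - g * n₁ * n₂ * hg
  · refine mul_left_cancel₀ (mul_ne_zero two_ne_zero ha) ?_
    linear_combination g ^ 2 * h₂ - g * n₃ * hg + 2 * b * g * y * hv

theorem reduced_eqs_of_family_iii {t₁ t₂ t₃ t₄ u v k : ℤ} (hu : u ≠ c)
    (hg : g = Int.gcd (v * a) (u - c))
    (h₁ : u ^ 2 + a * b * v ^ 2 = c ^ 2)
    (h₂ : g ^ 2 * (a * t₁ ^ 2 + b * t₄ ^ 2) + 2 * a * c * t₂ * t₃ * (c - u) = c * g ^ 2)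
    (h₃ : (g * t₁ + c * k) * (u - c) + v * b * g * t₄ = 0) :
    a * t₁ ^ 2 + b * t₄ ^ 2 + (a * ((u - c) / g) ^ 2 + b * (v * a / g) ^ 2) * t₂ * t₃ = c ∧
      2 * (a * t₁ * ((u - c) / g) + b * t₄ * (v * a / g))
        + (a * ((u - c) / g) ^ 2 + b * (v * a / g) ^ 2) * -k = 0 := by
  have hg₀ : g ≠ 0 := by
    rw [hg, Int.natCast_ne_zero, Ne, Int.gcd_eq_zero_iff, not_and]
    exact fun _ => sub_ne_zero.mpr hu
  obtain ⟨p, hp⟩ : g ∣ u - c := hg ▸ Int.gcd_dvd_right _ _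
  obtain ⟨q, hq⟩ : g ∣ v * a := hg ▸ Int.gcd_dvd_left _ _
  rw [hp, hq, Int.mul_ediv_cancel_left _ hg₀, Int.mul_ediv_cancel_left _ hg₀]
  have hD : g ^ 2 * (a * p ^ 2 + b * q ^ 2) = 2 * a * c * (c - u) := by
    linear_combination a * h₁ - a * (u - c + g * p) * hp - b * (v * a + g * q) * hq
  have hg₂ : g ^ 2 ≠ 0 := pow_ne_zero 2 hg₀
  constructor
  · refine mul_left_cancel₀ hg₂ ?_
    linear_combination h₂ + t₂ * t₃ * hD
  · refine mul_left_cancel₀ hg₂ ?_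
    linear_combination 2 * a * h₃ - 2 * a * (g * t₁ + c * k) * hp - 2 * b * t₄ * g * hq
      - k * hD + 2 * a * c * k * hp

end Classification

theorem stmt_11_general (a b c : ℤ) (ha : a ≠ 0) (hb : b ≠ 0) (hc : c ≠ 0)
    (hnsq : ¬ ∃ s : ℤ, -(a * b) = s ^ 2)
    (X Y : Matrix (Fin 2) (Fin 2) ℤ) :
    (a • X ^ 2 + b • Y ^ 2 = c • (1 : Matrix (Fin 2) (Fin 2) ℤ) ∧ X * Y = Y * X) ↔
    ((∃ t₁ t₂ : ℤ, X = t₁ • (1 : Matrix (Fin 2) (Fin 2) ℤ) ∧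
        Y = t₂ • (1 : Matrix (Fin 2) (Fin 2) ℤ) ∧ a * t₁ ^ 2 + b * t₂ ^ 2 = c) ∨
     (∃ t₁ t₂ t₃ t₄ : ℤ, X = t₁ • (1 : Matrix (Fin 2) (Fin 2) ℤ) ∧
        Y = !![t₄, t₂; t₃, -t₄] ∧ a * t₁ ^ 2 + b * (t₄ ^ 2 + t₂ * t₃) = c) ∨
     (∃ t₁ t₂ t₃ t₄ u v k g : ℤ, u ≠ c ∧ g = Int.gcd (v * a) (u - c) ∧
        X = t₁ • (1 : Matrix (Fin 2) (Fin 2) ℤ) + ((u - c) / g) • !![0, t₂; t₃, -k] ∧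
        Y = t₄ • (1 : Matrix (Fin 2) (Fin 2) ℤ) + ((v * a) / g) • !![0, t₂; t₃, -k] ∧
        u ^ 2 + a * b * v ^ 2 = c ^ 2 ∧
        g ^ 2 * (a * t₁ ^ 2 + b * t₄ ^ 2) + 2 * a * c * t₂ * t₃ * (c - u) = c * g ^ 2 ∧
        (g * t₁ + c * k) * (u - c) + v * b * g * t₄ = 0)) := by
  constructor
  · rintro ⟨hM, hXY⟩
    obtain ⟨x, y, p, q, n₁, n₂, n₃, hpq, rfl, rfl⟩ :=
      Matrix.exists_eq_smul_one_add_smul_of_mul_comm hXY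
    obtain ⟨h₁, h₂ | ⟨rfl, rfl, rfl⟩⟩ := Matrix.smul_sq_add_smul_sq_eq_smul_one_iff.mp hM
    · rcases eq_or_ne p 0 with rfl | hp
      · exact .inr (.inl (exists_family_ii hb hpq h₁ h₂))
      · exact .inr (.inr (exists_family_iii ha hc hnsq hp hpq h₁ h₂))
    · exact .inl ⟨x, y, by simp [← Matrix.ext_iff, Fin.forall_fin_two],
        by simp [← Matrix.ext_iff, Fin.forall_fin_two], by simpa using h₁⟩
  · rintro (⟨t₁, t₂, rfl, rfl, h⟩ | ⟨t₁, t₂, t₃, t₄, rfl, rfl, h⟩ |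
      ⟨t₁, t₂, t₃, t₄, u, v, k, g, hu, hg, rfl, rfl, h₁, h₂, h₃⟩)
    · simpa using Matrix.smul_sq_add_smul_sq_eq_smul_one_and_mul_comm (x := t₁) (y := t₂)
        (p := 0) (q := 0) (n₁ := 0) (n₂ := 0) (n₃ := 0) (by simpa using h) (by simp)
    · have hX : t₁ • (1 : Matrix (Fin 2) (Fin 2) ℤ)
          = t₁ • 1 + (0 : ℤ) • !![0, t₂; t₃, -(2 * t₄)] := by
        rw [zero_smul, add_zero]
      have hY : !![t₄, t₂; t₃, -t₄]
          = t₄ • (1 : Matrix (Fin 2) (Fin 2) ℤ) + (1 : ℤ) • !![0, t₂; t₃, -(2 * t₄)] :=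
        Matrix.eq_smul_one_add_smul_iff.mpr ⟨rfl, by simp, by simp, by simp; ring⟩
      rw [hX, hY]
      exact Matrix.smul_sq_add_smul_sq_eq_smul_one_and_mul_comm (by linear_combination h) (by ring)
    · obtain ⟨h₁, h₂⟩ := reduced_eqs_of_family_iii hu hg h₁ h₂ h₃
      exact Matrix.smul_sq_add_smul_sq_eq_smul_one_and_mul_comm h₁ h₂

theorem stmt_11 (a b c : ℤ) (ha : a ≠ 0) (hb : b ≠ 0) (hc : c ≠ 0)
    (hnsq : ¬ ∃ s : ℤ, -(a * b) = s ^ 2) (hgcd : Int.gcd a (Int.gcd b c) = 1)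
    (X Y : Matrix (Fin 2) (Fin 2) ℤ) :
    (a • X ^ 2 + b • Y ^ 2 = c • (1 : Matrix (Fin 2) (Fin 2) ℤ) ∧ X * Y = Y * X) ↔
    ((∃ t₁ t₂ : ℤ, X = t₁ • (1 : Matrix (Fin 2) (Fin 2) ℤ) ∧
        Y = t₂ • (1 : Matrix (Fin 2) (Fin 2) ℤ) ∧ a * t₁ ^ 2 + b * t₂ ^ 2 = c) ∨
     (∃ t₁ t₂ t₃ t₄ : ℤ, X = t₁ • (1 : Matrix (Fin 2) (Fin 2) ℤ) ∧
        Y = !![t₄, t₂; t₃, -t₄] ∧ a * t₁ ^ 2 + b * (t₄ ^ 2 + t₂ * t₃) = c) ∨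
     (∃ t₁ t₂ t₃ t₄ u v k g : ℤ, u ≠ c ∧ g = Int.gcd (v * a) (u - c) ∧
        X = t₁ • (1 : Matrix (Fin 2) (Fin 2) ℤ) + ((u - c) / g) • !![0, t₂; t₃, -k] ∧
        Y = t₄ • (1 : Matrix (Fin 2) (Fin 2) ℤ) + ((v * a) / g) • !![0, t₂; t₃, -k] ∧
        u ^ 2 + a * b * v ^ 2 = c ^ 2 ∧
        g ^ 2 * (a * t₁ ^ 2 + b * t₄ ^ 2) + 2 * a * c * t₂ * t₃ * (c - u) = c * g ^ 2 ∧
        (g * t₁ + c * k) * (u - c) + v * b * g * t₄ = 0)) :=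
  stmt_11_general a b c ha hb hc hnsq X Y
end

section
/- Let p be a prime with p ≡ 3 (mod 4) and let ε ∈ {1, −1}. Then X, Y ∈ M₂(ℤ) satisfy X² + Y² = εp·I if and only if one of the following holds for some integers: (i) X = [[t₁, t₂],[t₃, −t₁]] and Y = [[s₁, s₂],[s₃, −s₁]] with t₁² + t₂t₃ + s₁² + s₂s₃ = εp; (ii) X = t₁I and Y = [[t₄, t₂],[t₃, −t₄]] with t₁² + t₄² + t₂t₃ = εp; (iii) X = [[t₁, t₂],[t₃, −t₁]] and Y = t₄I with t₁² + t₄² + t₂t₃ = εp; (iv) X = [[t₁, t₂],[t₃, t₄]] and Y = [[t₄, −t₂],[−t₃, t₁]] with t₁² + t₄² + 2t₂t₃ = εp; (v) X = [[t₁, t₂],[t₃, −t₄]] and Y = [[t₄, t₂],[t₃, −t₁]] with t₁² + t₄² + 2t₂t₃ = εp. -/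
/-!
By Cayley–Hamilton, `X² + Y² = w • 1` (with `w = εp`) is equivalent to
`tr X • X + tr Y • Y = (w + det X + det Y) • 1`. If exactly one trace vanishes, the other
matrix is scalar; if both vanish we are in case (i). If neither vanishes, put `Z = X + iY` over
`ℤ[i]`: then `det Z · tr Z̄ = w · tr Z`, so `det Z` has norm `p²`, and as `p ≡ 3 (mod 4)` is
inert in `ℤ[i]`, `det Z ∈ {±p, ±ip}`. The values `±p` force a trace to vanish, and `±ip` give
`tr Y = ± tr X`; then `X ± Y` is scalar, which makes `Y = ± adj X`: cases (iv) and (v).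
-/

open Matrix

theorem Int.dvd_of_dvd_sq_add_sq_of_mod_four_eq_three {p : ℕ} [Fact p.Prime] (hp4 : p % 4 = 3)
    {x y : ℤ} (h : (p : ℤ) ∣ x ^ 2 + y ^ 2) : (p : ℤ) ∣ y := by
  rw [← ZMod.intCast_zmod_eq_zero_iff_dvd] at h ⊢
  by_contra hy
  push_cast at h
  exact ZMod.mod_four_ne_three_of_sq_eq_neg_sq' hy (eq_neg_of_add_eq_zero_left h) hp4

theorem Int.eq_zero_or_eq_zero_of_sq_add_sq_eq_sq_of_mod_four_eq_three {p : ℕ} [Fact p.Prime]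
    (hp4 : p % 4 = 3) {x y : ℤ} (h : x ^ 2 + y ^ 2 = p ^ 2) : x = 0 ∨ y = 0 := by
  have hdvd : (p : ℤ) ∣ x ^ 2 + y ^ 2 := h ▸ dvd_pow_self _ two_ne_zero
  obtain ⟨u, rfl⟩ :=
    Int.dvd_of_dvd_sq_add_sq_of_mod_four_eq_three hp4 (add_comm (x ^ 2) (y ^ 2) ▸ hdvd)
  obtain ⟨v, rfl⟩ := Int.dvd_of_dvd_sq_add_sq_of_mod_four_eq_three hp4 hdvd
  have hp0 : (p : ℤ) ≠ 0 := Int.natCast_ne_zero.mpr (Fact.out : p.Prime).ne_zero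
  have huv : u ^ 2 + v ^ 2 = 1 :=
    mul_left_cancel₀ (pow_ne_zero 2 hp0) (by linear_combination h)
  simp only [mul_eq_zero, hp0, false_or]
  by_contra! ⟨hu, hv⟩
  linarith [pow_pos (abs_pos.mpr hu) 2, pow_pos (abs_pos.mpr hv) 2, sq_abs u, sq_abs v]

namespace Matrix

theorem eq_smul_one_of_smul_eq_smul_one {n R : Type*} [Fintype n] [DecidableEq n] [Ring R]
    [NoZeroDivisors R] {t c : R} (ht : t ≠ 0) {M : Matrix n n R} (h : t • M = c • 1) (i : n) :
    M = M i i • 1 := by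
  have hi : t * M i i = c := by simpa using congrFun₂ h i i
  refine smul_right_injective _ ht ?_
  simp only [h, smul_smul, hi]

variable {R : Type*} [CommRing R] (X Y : Matrix (Fin 2) (Fin 2) R)

theorem sq_fin_two_eq_trace_smul_sub_det_smul_s13 : X ^ 2 = X.trace • X - X.det • 1 := by
  ext i j
  fin_cases i <;> fin_cases j <;>
    simp [sq, mul_apply, trace_fin_two, det_fin_two] <;> ring

theorem adjugate_fin_two_eq_trace_smul_sub : adjugate X = X.trace • 1 - X := by
  ext i j
  fin_cases i <;> fin_cases j <;> simp [adjugate_fin_two, trace_fin_two]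

theorem trace_adjugate_fin_two : trace (adjugate X) = trace X := by
  simp [adjugate_fin_two, trace_fin_two, add_comm]

theorem trace_adjugate_mul_comm_fin_two : trace (adjugate X * Y) = trace (adjugate Y * X) := by
  simp [adjugate_fin_two, trace_fin_two, vecMul, dotProduct, Fin.sum_univ_two]
  ring

theorem sq_add_sq_apply_zero_zero_fin_two :
    (X ^ 2 + Y ^ 2) 0 0 = X 0 0 ^ 2 + X 0 1 * X 1 0 + (Y 0 0 ^ 2 + Y 0 1 * Y 1 0) := by
  simp [sq, mul_apply]

theorem eq_of_trace_eq_zero_fin_two (hX : X.trace = 0) :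
    X = !![X 0 0, X 0 1; X 1 0, -X 0 0] := by
  rw [trace_fin_two, add_eq_zero_iff_eq_neg'] at hX
  rw [← hX]; exact eta_fin_two X

variable {X Y}

theorem trace_smul_add_trace_smul_of_sq_add_sq {w : R} (h : X ^ 2 + Y ^ 2 = w • 1) :
    X.trace • X + Y.trace • Y = (w + X.det + Y.det) • 1 := by
  rw [sq_fin_two_eq_trace_smul_sub_det_smul_s13, sq_fin_two_eq_trace_smul_sub_det_smul_s13] at h
  rw [add_smul, add_smul, ← h]
  abel

/-- With `Z = X + iY` and `det Z = (det X - det Y) + i · tr (adj X * Y)`, these are the real and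
imaginary parts of `det Z · tr Z̄ = w · tr Z`. -/
theorem trace_relations_of_sq_add_sq {w : R} (h : X ^ 2 + Y ^ 2 = w • 1) :
    (X.det - Y.det) * X.trace + trace (adjugate X * Y) * Y.trace = w * X.trace ∧
      trace (adjugate X * Y) * X.trace - (X.det - Y.det) * Y.trace = w * Y.trace := by
  have h' := trace_smul_add_trace_smul_of_sq_add_sq h
  have hX := congrArg (fun M ↦ trace (adjugate X * M)) h'
  have hY := congrArg (fun M ↦ trace (adjugate Y * M)) h'
  simp only [mul_add, Matrix.mul_smul, trace_add, trace_smul, adjugate_mul, trace_one,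
    Fintype.card_fin, trace_adjugate_fin_two, smul_eq_mul, mul_one] at hX hY
  rw [trace_adjugate_mul_comm_fin_two Y X] at hY
  constructor
  · linear_combination hX
  · linear_combination hY

theorem eq_smul_one_of_smul_eq_smul_one_of_trace_eq [NoZeroDivisors R] [NeZero (2 : R)]
    {t c μ : R} (ht : t ≠ 0) {M : Matrix (Fin 2) (Fin 2) R} (h : t • M = c • 1)
    (hM : M.trace = 2 * μ) : M = μ • 1 := by
  have hM₀ := eq_smul_one_of_smul_eq_smul_one ht h 0
  rw [hM₀, trace_smul, trace_one, Fintype.card_fin, smul_eq_mul, Nat.cast_ofNat,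
    mul_comm] at hM
  rw [hM₀, mul_left_cancel₀ two_ne_zero hM]

theorem trace_eq_or_eq_neg_of_sq_add_sq {p : ℕ} [Fact p.Prime] (hp4 : p % 4 = 3) {w : ℤ}
    (hw : w ^ 2 = p ^ 2) {X Y : Matrix (Fin 2) (Fin 2) ℤ} (h : X ^ 2 + Y ^ 2 = w • 1)
    (hX : X.trace ≠ 0) (hY : Y.trace ≠ 0) : Y.trace = X.trace ∨ Y.trace = -X.trace := by
  obtain ⟨h₁, h₂⟩ := trace_relations_of_sq_add_sq h
  set δ := X.det - Y.det
  set β := trace (adjugate X * Y)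
  have hw0 : w ≠ 0 := by
    rintro rfl
    have : (0 : ℤ) < p := Int.natCast_pos.mpr (Fact.out : p.Prime).pos
    nlinarith
  have hnorm : δ ^ 2 + β ^ 2 = p ^ 2 := by
    rw [← hw]
    refine mul_right_cancel₀ (mul_ne_zero hX hY) ?_
    linear_combination (δ + w) * Y.trace * h₁ + β * Y.trace * h₂
  rcases Int.eq_zero_or_eq_zero_of_sq_add_sq_eq_sq_of_mod_four_eq_three hp4 hnorm with hδ | hβ
  · rw [hδ, ← hw, zero_pow two_ne_zero, zero_add, sq_eq_sq_iff_eq_or_eq_neg] at hnorm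
    rcases hnorm with hβ | hβ
    · exact Or.inl (mul_left_cancel₀ hw0
        (by linear_combination h₁ - X.trace * hδ - Y.trace * hβ))
    · exact Or.inr (mul_left_cancel₀ hw0
        (by linear_combination -h₁ + X.trace * hδ + Y.trace * hβ))
  · rw [hβ, ← hw, zero_pow two_ne_zero, add_zero, sq_eq_sq_iff_eq_or_eq_neg] at hnorm
    rcases hnorm with hδ | hδ
    · exact absurd (mul_left_cancel₀ (mul_ne_zero two_ne_zero hw0)
        (by linear_combination -h₂ + X.trace * hβ - Y.trace * hδ)) hY
    · exact absurd (mul_left_cancel₀ (mul_ne_zero two_ne_zero hw0)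
        (by linear_combination -h₁ + Y.trace * hβ + X.trace * hδ)) hX

theorem sq_add_sq_eq_smul_one_cases {p : ℕ} [Fact p.Prime] (hp4 : p % 4 = 3) {w : ℤ}
    (hw : w ^ 2 = p ^ 2) {X Y : Matrix (Fin 2) (Fin 2) ℤ} (h : X ^ 2 + Y ^ 2 = w • 1) :
    (X.trace = 0 ∧ Y.trace = 0) ∨ (X = X 0 0 • 1 ∧ Y.trace = 0) ∨
      (X.trace = 0 ∧ Y = Y 0 0 • 1) ∨ Y = adjugate X ∨ Y = -adjugate X := by
  have h' := trace_smul_add_trace_smul_of_sq_add_sq h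
  by_cases hX : X.trace = 0 <;> by_cases hY : Y.trace = 0
  · exact Or.inl ⟨hX, hY⟩
  · rw [hX, zero_smul, zero_add] at h'
    exact Or.inr (Or.inr (Or.inl ⟨hX, eq_smul_one_of_smul_eq_smul_one hY h' 0⟩))
  · rw [hY, zero_smul, add_zero] at h'
    exact Or.inr (Or.inl ⟨eq_smul_one_of_smul_eq_smul_one hX h' 0, hY⟩)
  · refine Or.inr (Or.inr (Or.inr ?_))
    rw [adjugate_fin_two_eq_trace_smul_sub]
    rcases trace_eq_or_eq_neg_of_sq_add_sq hp4 hw h hX hY with hS | hS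
    · rw [hS, ← smul_add] at h'
      have hsum := eq_smul_one_of_smul_eq_smul_one_of_trace_eq hX h'
        (by rw [trace_add, hS, two_mul])
      exact Or.inl (eq_sub_of_add_eq' hsum)
    · rw [hS, neg_smul, ← sub_eq_add_neg, ← smul_sub] at h'
      have hdiff := eq_smul_one_of_smul_eq_smul_one_of_trace_eq hX h'
        (by rw [trace_sub, hS, sub_neg_eq_add, two_mul])
      exact Or.inr (by rw [← hdiff]; abel)

end Matrix

theorem stmt_13 (p : ℕ) (hp : p.Prime) (hp4 : p % 4 = 3) (ε : ℤ) (hε : ε = 1 ∨ ε = -1)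
    (X Y : Matrix (Fin 2) (Fin 2) ℤ) :
    X ^ 2 + Y ^ 2 = (ε * p) • (1 : Matrix (Fin 2) (Fin 2) ℤ) ↔
    ((∃ t₁ t₂ t₃ s₁ s₂ s₃ : ℤ, X = !![t₁, t₂; t₃, -t₁] ∧ Y = !![s₁, s₂; s₃, -s₁] ∧
        t₁ ^ 2 + t₂ * t₃ + s₁ ^ 2 + s₂ * s₃ = ε * p) ∨
     (∃ t₁ t₂ t₃ t₄ : ℤ, X = t₁ • (1 : Matrix (Fin 2) (Fin 2) ℤ) ∧
        Y = !![t₄, t₂; t₃, -t₄] ∧ t₁ ^ 2 + t₄ ^ 2 + t₂ * t₃ = ε * p) ∨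
     (∃ t₁ t₂ t₃ t₄ : ℤ, X = !![t₁, t₂; t₃, -t₁] ∧
        Y = t₄ • (1 : Matrix (Fin 2) (Fin 2) ℤ) ∧ t₁ ^ 2 + t₄ ^ 2 + t₂ * t₃ = ε * p) ∨
     (∃ t₁ t₂ t₃ t₄ : ℤ, X = !![t₁, t₂; t₃, t₄] ∧ Y = !![t₄, -t₂; -t₃, t₁] ∧
        t₁ ^ 2 + t₄ ^ 2 + 2 * t₂ * t₃ = ε * p) ∨
     (∃ t₁ t₂ t₃ t₄ : ℤ, X = !![t₁, t₂; t₃, -t₄] ∧ Y = !![t₄, t₂; t₃, -t₁] ∧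
        t₁ ^ 2 + t₄ ^ 2 + 2 * t₂ * t₃ = ε * p)) := by
  have := Fact.mk hp
  constructor
  · intro h
    have h₀₀ : X 0 0 ^ 2 + X 0 1 * X 1 0 + (Y 0 0 ^ 2 + Y 0 1 * Y 1 0) = ε * p :=
      (sq_add_sq_apply_zero_zero_fin_two X Y).symm.trans (by rw [h]; simp)
    have hw : (ε * p) ^ 2 = (p : ℤ) ^ 2 := by rcases hε with rfl | rfl <;> ring
    rcases sq_add_sq_eq_smul_one_cases hp4 hw h with
      ⟨hX, hY⟩ | ⟨hX, hY⟩ | ⟨hX, hY⟩ | rfl | rfl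
    · exact Or.inl ⟨_, _, _, _, _, _, eq_of_trace_eq_zero_fin_two X hX,
        eq_of_trace_eq_zero_fin_two Y hY, by linear_combination h₀₀⟩
    · have hX₀₁ : X 0 1 = 0 := by rw [hX]; simp
      exact Or.inr (Or.inl ⟨_, _, _, _, hX, eq_of_trace_eq_zero_fin_two Y hY,
        by linear_combination h₀₀ - X 1 0 * hX₀₁⟩)
    · have hY₀₁ : Y 0 1 = 0 := by rw [hY]; simp
      exact Or.inr (Or.inr (Or.inl ⟨_, _, _, _, eq_of_trace_eq_zero_fin_two X hX, hY,
        by linear_combination h₀₀ - Y 1 0 * hY₀₁⟩))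
    · refine Or.inr (Or.inr (Or.inr (Or.inl
        ⟨_, _, _, _, eta_fin_two X, adjugate_fin_two X, ?_⟩)))
      simp only [adjugate_fin_two, of_apply, cons_val', cons_val_zero, cons_val_one, empty_val',
        cons_val_fin_one] at h₀₀
      linear_combination h₀₀
    · refine Or.inr (Or.inr (Or.inr (Or.inr ⟨X 0 0, X 0 1, X 1 0, -X 1 1, ?_, ?_, ?_⟩)))
      · rw [neg_neg]; exact eta_fin_two X
      · rw [adjugate_fin_two]; ext i j; fin_cases i <;> fin_cases j <;> simp
      · simp only [adjugate_fin_two, Matrix.neg_apply, of_apply, cons_val', cons_val_zero,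
          cons_val_one, empty_val'] at h₀₀
        linear_combination h₀₀
  · rintro (⟨t₁, t₂, t₃, s₁, s₂, s₃, rfl, rfl, hc⟩ | ⟨t₁, t₂, t₃, t₄, rfl, rfl, hc⟩ |
      ⟨t₁, t₂, t₃, t₄, rfl, rfl, hc⟩ | ⟨t₁, t₂, t₃, t₄, rfl, rfl, hc⟩ |
      ⟨t₁, t₂, t₃, t₄, rfl, rfl, hc⟩) <;>
    · ext i j
      fin_cases i <;> fin_cases j <;> simp [sq, one_fin_two] <;>
        first | linear_combination hc | ring
end

section
/- Let a, b be nonzero integers such that −ab is not a perfect square, and let ε ∈ {1, −1}. Then X, Y ∈ M₂(ℤ) satisfy aX² + bY² = εI and XY = YX if and only if one of the following holds: (i) X = t₁I and Y = t₂I for integers t₁, t₂ with a·t₁² + b·t₂² = ε; (ii) X = t₁I and Y = [[t₄, t₂],[t₃, −t₄]] for integers t₁, t₂, t₃, t₄ with a·t₁² + b(t₄² + t₂t₃) = ε; (iii) there exist integers t₁, t₂, t₃, t₄, u, v with u ≠ ε, g = gcd(va, u − ε), such that X = [[t₁, ((u−ε)/g)·t₂],[((u−ε)/g)·t₃, ε(u·t₁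 + v·b·t₄)]], Y = [[t₄, (va/g)·t₂],[(va/g)·t₃, ε(v·a·t₁ − u·t₄)]], and the relations u² + abv² = 1 and g²(a·t₁² + b·t₄²) + 2a·t₂t₃·(1 − εu) = ε·g² hold. -/
/-!
Formally adjoin `α`, `β` with `α² = a` and `β² = -b`. For commuting `X`, `Y` the matrices
`Z = αX + βY` and `W = αX - βY` satisfy `ZW = aX² + bY² = ε`, and `det Z = u + αβ v` with
`u = a det X - b det Y` and `v` the mixed determinant of `X` and `Y`. From `adj Z * Z = det Z`
one gets `ε adj Z = (det Z) W`, whose `α`- and `β`-components `ε adj X = uX + bvY` and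
`ε adj Y = avX - uY` are proved directly. Applying the linear involution `adj` once more gives
`u² + abv² = 1`. If `u = ε` then `v = 0`, so `adj X = X` and `adj Y = -Y`: `X` is scalar and `Y`
traceless. Otherwise `(u - ε) y = va x` for each pair `(x, y)` of corresponding off-diagonal
entries of `X` and `Y`, so `(x, y)` is an integer multiple of the primitive vector
`((u - ε) / g, va / g)`.
-/

namespace Matrix

variable {R : Type*} [CommRing R] (X Y : Matrix (Fin 2) (Fin 2) R)

def mixedDet : R := (X + Y).det - X.det - Y.det

theorem mixedDet_comm : mixedDet X Y = mixedDet Y X := by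
  simp only [mixedDet, add_comm X Y]; ring

theorem adjugate_add_fin_two : adjugate (X + Y) = adjugate X + adjugate Y := by
  simp only [adjugate_fin_two, add_apply, neg_add]
  ext i j; fin_cases i <;> fin_cases j <;> rfl

theorem adjugate_sub_fin_two : adjugate (X - Y) = adjugate X - adjugate Y := by
  simp only [adjugate_fin_two, sub_apply, neg_sub']
  ext i j; fin_cases i <;> fin_cases j <;> rfl

theorem adjugate_mul_add_adjugate_mul :
    adjugate X * Y + adjugate Y * X = mixedDet X Y • 1 := by
  have h := adjugate_mul (X + Y)
  rw [adjugate_add_fin_two, add_mul, mul_add, mul_add, adjugate_mul, adjugate_mul] at h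
  rw [mixedDet, sub_sub, sub_smul, ← h, add_smul]
  abel

variable {X Y} {a b ε : R}

theorem smul_adjugate_fst_eq (hXY : Commute X Y) (h : a • X ^ 2 + b • Y ^ 2 = ε • 1) :
    ε • adjugate X = (a * X.det - b * Y.det) • X + (b * mixedDet X Y) • Y := by
  have hmix : adjugate X * Y = mixedDet X Y • 1 - adjugate Y * X :=
    eq_sub_of_add_eq (adjugate_mul_add_adjugate_mul X Y)
  have hYXY : adjugate Y * X * Y = Y.det • X := by
    rw [Matrix.mul_assoc, hXY.eq, ← Matrix.mul_assoc, adjugate_mul, smul_mul_assoc,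
      Matrix.one_mul]
  calc ε • adjugate X = adjugate X * (a • X ^ 2 + b • Y ^ 2) := by
        rw [h, mul_smul_comm, mul_one]
    _ = a • (adjugate X * X * X) + b • (adjugate X * Y * Y) := by
        simp only [sq, mul_add, mul_smul_comm, Matrix.mul_assoc]
    _ = a • X.det • X + b • (mixedDet X Y • Y - Y.det • X) := by
        rw [adjugate_mul, hmix, Matrix.sub_mul, hYXY, smul_mul_assoc, smul_mul_assoc,
          Matrix.one_mul, Matrix.one_mul]
    _ = (a * X.det - b * Y.det) • X + (b * mixedDet X Y) • Y := by
        simp only [smul_sub, sub_smul, mul_smul]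
        abel

theorem smul_adjugate_snd_eq (hXY : Commute X Y) (h : a • X ^ 2 + b • Y ^ 2 = ε • 1) :
    ε • adjugate Y = (a * mixedDet X Y) • X - (a * X.det - b * Y.det) • Y := by
  rw [add_comm] at h
  rw [smul_adjugate_fst_eq hXY.symm h, mixedDet_comm]
  simp only [sub_smul]
  abel

theorem adjugate_adjugate_fin_two : adjugate (adjugate X) = X := by
  simp [adjugate_adjugate X (by simp)]

theorem adjugate_smul_fin_two (r : R) : adjugate (r • X) = r • adjugate X := by
  simp [adjugate_smul]

theorem norm_smul_eq_self_of_smul_adjugate {u v : R} (hε : ε * ε = 1)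
    (hX : ε • adjugate X = u • X + (b * v) • Y) (hY : ε • adjugate Y = (a * v) • X - u • Y) :
    (u ^ 2 + a * b * v ^ 2) • X = X ∧ (u ^ 2 + a * b * v ^ 2) • Y = Y := by
  have hinvol : ∀ Z : Matrix (Fin 2) (Fin 2) R, Z = ε • adjugate (ε • adjugate Z) := fun Z => by
    rw [adjugate_smul_fin_two, adjugate_adjugate_fin_two, smul_smul, hε, one_smul]
  constructor
  · calc (u ^ 2 + a * b * v ^ 2) • X = u • (ε • adjugate X) + (b * v) • (ε • adjugate Y) := by
          rw [hX, hY]; module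
      _ = ε • adjugate (u • X + (b * v) • Y) := by
          rw [adjugate_add_fin_two, adjugate_smul_fin_two, adjugate_smul_fin_two,
            smul_add, smul_comm ε u, smul_comm ε (b * v)]
      _ = X := by rw [← hX, ← hinvol]
  · calc (u ^ 2 + a * b * v ^ 2) • Y = (a * v) • (ε • adjugate X) - u • (ε • adjugate Y) := by
          rw [hX, hY]; module
      _ = ε • adjugate ((a * v) • X - u • Y) := by
          rw [adjugate_sub_fin_two, adjugate_smul_fin_two, adjugate_smul_fin_two,
            smul_sub, smul_comm ε u, smul_comm ε (a * v)]
      _ = Y := by rw [← hY, ← hinvol]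

theorem sq_add_mul_mixedDet_sq_eq_one (hε : ε * ε = 1) (hXY : Commute X Y)
    (h : a • X ^ 2 + b • Y ^ 2 = ε • 1) :
    (a * X.det - b * Y.det) ^ 2 + a * b * mixedDet X Y ^ 2 = 1 := by
  set u := a * X.det - b * Y.det
  set v := mixedDet X Y
  obtain ⟨hXfix, hYfix⟩ := norm_smul_eq_self_of_smul_adjugate hε (smul_adjugate_fst_eq hXY h)
    (smul_adjugate_snd_eq hXY h)
  set N := u ^ 2 + a * b * v ^ 2
  have hsq : ∀ Z : Matrix (Fin 2) (Fin 2) R, N • Z = Z → N • Z ^ 2 = Z ^ 2 := fun Z hZ => by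
    rw [sq, ← smul_mul_assoc, hZ]
  have : (N * ε) • (1 : Matrix (Fin 2) (Fin 2) R) = ε • 1 := by
    rw [mul_smul, ← h, smul_add, smul_comm N a, smul_comm N b, hsq X hXfix, hsq Y hYfix]
  have hNε : N * ε = ε := by simpa using congrFun (congrFun this 0) 0
  calc N = N * ε * ε := by rw [mul_assoc, hε, mul_one]
    _ = 1 := by rw [hNε, hε]

theorem entries_of_smul_adjugate_eq {u v : R} (hε : ε * ε = 1)
    (hX : ε • adjugate X = u • X + (b * v) • Y) (hY : ε • adjugate Y = (a * v) • X - u • Y) :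
    X 1 1 = ε * (u * X 0 0 + v * b * Y 0 0) ∧ Y 1 1 = ε * (v * a * X 0 0 - u * Y 0 0) ∧
      (u - ε) * Y 0 1 = v * a * X 0 1 ∧ (u - ε) * Y 1 0 = v * a * X 1 0 := by
  have hX₀₀ := congrFun₂ hX 0 0
  have hY₀₀ := congrFun₂ hY 0 0
  have hY₀₁ := congrFun₂ hY 0 1
  have hY₁₀ := congrFun₂ hY 1 0
  simp only [adjugate_fin_two, of_apply, cons_val', cons_val_zero, cons_val_one, smul_apply,
    add_apply, sub_apply, smul_eq_mul] at hX₀₀ hY₀₀ hY₀₁ hY₁₀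
  refine ⟨?_, ?_, ?_, ?_⟩
  · linear_combination ε * hX₀₀ - X 1 1 * hε
  · linear_combination ε * hY₀₀ - Y 1 1 * hε
  · linear_combination hY₀₁
  · linear_combination hY₁₀

theorem sq_traceless_fin_two_s15 (p q r : R) : !![p, q; r, -p] ^ 2 = (p ^ 2 + q * r) • 1 := by
  rw [sq, mul_fin_two, one_fin_two]
  ext i j
  fin_cases i <;> fin_cases j <;>
    simp only [Fin.zero_eta, Fin.mk_one, Fin.isValue, of_apply, cons_val', cons_val_zero,
      cons_val_one, cons_val_fin_one, Matrix.smul_apply, smul_eq_mul] <;> ring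

theorem smul_sq_add_smul_sq_apply_zero_zero :
    (a • X ^ 2 + b • Y ^ 2) 0 0 =
      a * (X 0 0 * X 0 0 + X 0 1 * X 1 0) + b * (Y 0 0 * Y 0 0 + Y 0 1 * Y 1 0) := by
  simp [sq, mul_apply, Fin.sum_univ_two]

end Matrix

open Matrix

theorem IsCoprime.exists_eq_mul_of_mul_eq_mul {R : Type*} [CommRing R] {k m x y : R}
    (h : IsCoprime k m) (hxy : k * y = m * x) : ∃ t, x = k * t ∧ y = m * t := by
  obtain ⟨p, q, hpq⟩ := h
  exact ⟨p * x + q * y, by linear_combination -x * hpq - q * hxy,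
    by linear_combination -y * hpq + p * hxy⟩

theorem Int.exists_eq_div_gcd_mul {p q x y : ℤ} (hq : q ≠ 0) (h : q * y = p * x) :
    ∃ t, x = q / (p.gcd q : ℤ) * t ∧ y = p / (p.gcd q : ℤ) * t := by
  have hg : (p.gcd q : ℤ) ≠ 0 := by exact_mod_cast Int.gcd_ne_zero_right hq
  have hcop : IsCoprime (q / (p.gcd q : ℤ)) (p / (p.gcd q : ℤ)) := by
    rw [Int.coe_gcd]; exact (isCoprime_div_gcd_div_gcd hq).symm
  refine IsCoprime.exists_eq_mul_of_mul_eq_mul hcop (mul_left_cancel₀ hg ?_)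
  rw [← mul_assoc, ← mul_assoc, Int.mul_ediv_cancel' (Int.gcd_dvd_right p q),
    Int.mul_ediv_cancel' (Int.gcd_dvd_left p q), h]

theorem sq_mul_quadForm_eq {a b u v ε g k m : ℤ} (hε : ε * ε = 1) (hN : u ^ 2 + a * b * v ^ 2 = 1)
    (hk : g * k = u - ε) (hm : g * m = v * a) :
    g ^ 2 * (a * k ^ 2 + b * m ^ 2) = 2 * a * (1 - ε * u) := by
  linear_combination a * (g * k + u - ε) * hk + b * (g * m + v * a) * hm + a * hN + a * hε

theorem sq_add_sq_eq_smul_one_and_commute_of_param {a b ε u v g k m t₁ t₂ t₃ t₄ : ℤ}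
    (hε : ε * ε = 1) (hN : u ^ 2 + a * b * v ^ 2 = 1) (hg : g ≠ 0)
    (hk : g * k = u - ε) (hm : g * m = v * a)
    (h : g ^ 2 * (a * t₁ ^ 2 + b * t₄ ^ 2) + 2 * a * t₂ * t₃ * (1 - ε * u) = ε * g ^ 2) :
    a • !![t₁, k * t₂; k * t₃, ε * (u * t₁ + v * b * t₄)] ^ 2 +
        b • !![t₄, m * t₂; m * t₃, ε * (v * a * t₁ - u * t₄)] ^ 2 = ε • 1 ∧
      !![t₁, k * t₂; k * t₃, ε * (u * t₁ + v * b * t₄)] *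
        !![t₄, m * t₂; m * t₃, ε * (v * a * t₁ - u * t₄)] =
      !![t₄, m * t₂; m * t₃, ε * (v * a * t₁ - u * t₄)] *
        !![t₁, k * t₂; k * t₃, ε * (u * t₁ + v * b * t₄)] := by
  set x₄ := ε * (u * t₁ + v * b * t₄)
  set y₄ := ε * (v * a * t₁ - u * t₄)
  have hdiag : a * (t₁ ^ 2 + k ^ 2 * t₂ * t₃) + b * (t₄ ^ 2 + m ^ 2 * t₂ * t₃) = ε := by
    refine mul_left_cancel₀ (pow_ne_zero 2 hg) ?_
    linear_combination h + t₂ * t₃ * sq_mul_quadForm_eq hε hN hk hm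
  have hnorm : a * x₄ ^ 2 + b * y₄ ^ 2 = a * t₁ ^ 2 + b * t₄ ^ 2 := by
    linear_combination (u ^ 2 + a * b * v ^ 2) * (a * t₁ ^ 2 + b * t₄ ^ 2) * hε
      + (a * t₁ ^ 2 + b * t₄ ^ 2) * hN
  have htrace : a * k * (t₁ + x₄) + b * m * (t₄ + y₄) = 0 := by
    refine mul_left_cancel₀ hg ?_
    linear_combination a * (t₁ + x₄) * hk + b * (t₄ + y₄) * hm
      - (a * u * t₁ + a * b * v * t₄) * hε + a * ε * t₁ * hN
  have hcomm : m * (t₁ - x₄) = k * (t₄ - y₄) := by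
    refine mul_left_cancel₀ hg ?_
    linear_combination (t₁ - x₄) * hm - (t₄ - y₄) * hk - (v * a * t₁ - u * t₄) * hε - ε * t₄ * hN
  constructor
  · rw [sq, sq, mul_fin_two, mul_fin_two, one_fin_two]
    ext i j
    fin_cases i <;> fin_cases j <;>
      simp only [Fin.zero_eta, Fin.mk_one, Fin.isValue, of_apply, cons_val', cons_val_zero,
        cons_val_one, cons_val_fin_one, Matrix.add_apply, Matrix.smul_apply, smul_eq_mul]
    · linear_combination hdiag
    · linear_combination t₂ * htrace
    · linear_combination t₃ * htrace
    · linear_combination hdiag + hnorm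
  · rw [mul_fin_two, mul_fin_two]
    ext i j
    fin_cases i <;> fin_cases j <;>
      simp only [Fin.zero_eta, Fin.mk_one, Fin.isValue, of_apply, cons_val', cons_val_zero,
        cons_val_one, cons_val_fin_one]
    · ring
    · linear_combination t₂ * hcomm
    · linear_combination -t₃ * hcomm
    · ring

theorem eq_smul_one_of_adjugate_eq_self {X : Matrix (Fin 2) (Fin 2) ℤ} (h : adjugate X = X) :
    X = X 0 0 • 1 := by
  have h₀₁ := congrFun₂ h 0 1
  have h₁₀ := congrFun₂ h 1 0
  have h₁₁ := congrFun₂ h 0 0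
  simp only [adjugate_fin_two, of_apply, cons_val', cons_val_zero, cons_val_one] at h₀₁ h₁₀ h₁₁
  rw [one_fin_two]
  ext i j
  fin_cases i <;> fin_cases j <;>
    simp only [Fin.zero_eta, Fin.mk_one, Fin.isValue, of_apply, cons_val', cons_val_zero,
      cons_val_one, cons_val_fin_one, Matrix.smul_apply, smul_eq_mul] <;> omega

theorem exists_scalar_traceless_of_det_eq {a b ε : ℤ} {X Y : Matrix (Fin 2) (Fin 2) ℤ}
    (ha : a ≠ 0) (hb : b ≠ 0) (hε : ε * ε = 1) (hXY : Commute X Y)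
    (h : a • X ^ 2 + b • Y ^ 2 = ε • 1) (hu : a * X.det - b * Y.det = ε) :
    ∃ t₁ t₂ t₃ t₄ : ℤ, X = t₁ • 1 ∧ Y = !![t₄, t₂; t₃, -t₄] ∧
      a * t₁ ^ 2 + b * (t₄ ^ 2 + t₂ * t₃) = ε := by
  have hX := smul_adjugate_fst_eq hXY h
  have hN := sq_add_mul_mixedDet_sq_eq_one hε hXY h
  obtain ⟨-, hy₁₁, -, -⟩ := entries_of_smul_adjugate_eq hε hX (smul_adjugate_snd_eq hXY h)
  rw [hu] at hX hN hy₁₁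
  have hv : mixedDet X Y = 0 := by
    have : a * b * mixedDet X Y ^ 2 = 0 := by linear_combination hN - hε
    simpa [ha, hb] using this
  have hX₁ : X = X 0 0 • 1 := by
    refine eq_smul_one_of_adjugate_eq_self ?_
    rw [hv, mul_zero, zero_smul, add_zero] at hX
    rw [← one_smul ℤ (adjugate X), ← hε, mul_smul, hX, smul_smul, hε, one_smul]
  have hx₀₁ : X 0 1 = 0 := by simpa using congrFun₂ hX₁ 0 1
  have hy₁₁ : Y 1 1 = -Y 0 0 := by rw [hy₁₁, hv]; linear_combination -Y 0 0 * hε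
  refine ⟨X 0 0, Y 0 1, Y 1 0, Y 0 0, hX₁, ?_, ?_⟩
  · conv_lhs => rw [eta_fin_two Y, hy₁₁]
  · have h₀₀ := congrFun₂ h 0 0
    rw [smul_sq_add_smul_sq_apply_zero_zero] at h₀₀
    simp only [Matrix.smul_apply, one_apply_eq, smul_eq_mul, mul_one] at h₀₀
    linear_combination h₀₀ - a * X 1 0 * hx₀₁

theorem exists_param_of_det_ne {a b ε : ℤ} {X Y : Matrix (Fin 2) (Fin 2) ℤ}
    (hε : ε * ε = 1) (hXY : Commute X Y)
    (h : a • X ^ 2 + b • Y ^ 2 = ε • 1) (hu : a * X.det - b * Y.det ≠ ε) :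
    ∃ t₁ t₂ t₃ t₄ u v g : ℤ, u ≠ ε ∧ g = Int.gcd (v * a) (u - ε) ∧
        X = !![t₁, ((u - ε) / g) * t₂; ((u - ε) / g) * t₃, ε * (u * t₁ + v * b * t₄)] ∧
        Y = !![t₄, (v * a / g) * t₂; (v * a / g) * t₃, ε * (v * a * t₁ - u * t₄)] ∧
        u ^ 2 + a * b * v ^ 2 = 1 ∧
        g ^ 2 * (a * t₁ ^ 2 + b * t₄ ^ 2) + 2 * a * t₂ * t₃ * (1 - ε * u) = ε * g ^ 2 := by
  have hN := sq_add_mul_mixedDet_sq_eq_one hε hXY h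
  obtain ⟨hx₁₁, hy₁₁, hy₀₁, hy₁₀⟩ := entries_of_smul_adjugate_eq hε
    (smul_adjugate_fst_eq hXY h) (smul_adjugate_snd_eq hXY h)
  set u := a * X.det - b * Y.det
  set v := mixedDet X Y
  obtain ⟨t₂, hx₀₁, hy₀₁⟩ := Int.exists_eq_div_gcd_mul (sub_ne_zero.2 hu) hy₀₁
  obtain ⟨t₃, hx₁₀, hy₁₀⟩ := Int.exists_eq_div_gcd_mul (sub_ne_zero.2 hu) hy₁₀
  refine ⟨X 0 0, t₂, t₃, Y 0 0, u, v, _, hu, rfl, ?_, ?_, hN, ?_⟩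
  · conv_lhs => rw [eta_fin_two X, hx₀₁, hx₁₀, hx₁₁]
  · conv_lhs => rw [eta_fin_two Y, hy₀₁, hy₁₀, hy₁₁]
  · have h₀₀ := congrFun₂ h 0 0
    rw [smul_sq_add_smul_sq_apply_zero_zero, hx₀₁, hx₁₀, hy₀₁, hy₁₀] at h₀₀
    simp only [Matrix.smul_apply, one_apply_eq, smul_eq_mul, mul_one] at h₀₀
    linear_combination (Int.gcd (v * a) (u - ε) : ℤ) ^ 2 * h₀₀ - t₂ * t₃ * sq_mul_quadForm_eq hε hN
      (Int.mul_ediv_cancel' (Int.gcd_dvd_right _ _)) (Int.mul_ediv_cancel' (Int.gcd_dvd_left _ _))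

theorem stmt_15_general (a b : ℤ) (ha : a ≠ 0) (hb : b ≠ 0)
    (ε : ℤ) (hε : ε = 1 ∨ ε = -1)
    (X Y : Matrix (Fin 2) (Fin 2) ℤ) :
    (a • X ^ 2 + b • Y ^ 2 = ε • (1 : Matrix (Fin 2) (Fin 2) ℤ) ∧ X * Y = Y * X) ↔
    ((∃ t₁ t₂ : ℤ, X = t₁ • (1 : Matrix (Fin 2) (Fin 2) ℤ) ∧
        Y = t₂ • (1 : Matrix (Fin 2) (Fin 2) ℤ) ∧ a * t₁ ^ 2 + b * t₂ ^ 2 = ε) ∨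
     (∃ t₁ t₂ t₃ t₄ : ℤ, X = t₁ • (1 : Matrix (Fin 2) (Fin 2) ℤ) ∧
        Y = !![t₄, t₂; t₃, -t₄] ∧ a * t₁ ^ 2 + b * (t₄ ^ 2 + t₂ * t₃) = ε) ∨
     (∃ t₁ t₂ t₃ t₄ u v g : ℤ, u ≠ ε ∧ g = Int.gcd (v * a) (u - ε) ∧
        X = !![t₁, ((u - ε) / g) * t₂; ((u - ε) / g) * t₃, ε * (u * t₁ + v * b * t₄)] ∧
        Y = !![t₄, (v * a / g) * t₂; (v * a / g) * t₃, ε * (v * a * t₁ - u * t₄)] ∧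
        u ^ 2 + a * b * v ^ 2 = 1 ∧
        g ^ 2 * (a * t₁ ^ 2 + b * t₄ ^ 2) + 2 * a * t₂ * t₃ * (1 - ε * u) = ε * g ^ 2)) := by
  have hε₂ : ε * ε = 1 := by rcases hε with rfl | rfl <;> norm_num
  constructor
  · rintro ⟨h, hXY⟩
    by_cases hu : a * X.det - b * Y.det = ε
    · exact Or.inr (Or.inl (exists_scalar_traceless_of_det_eq ha hb hε₂ hXY h hu))
    · exact Or.inr (Or.inr (exists_param_of_det_ne hε₂ hXY h hu))
  · rintro (⟨t₁, t₂, rfl, rfl, h⟩ | ⟨t₁, t₂, t₃, t₄, rfl, rfl, h⟩ |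
      ⟨t₁, t₂, t₃, t₄, u, v, g, hu, rfl, rfl, rfl, hN, h⟩)
    · refine ⟨?_, ((Commute.one_left _).smul_left t₁).eq⟩
      rw [smul_pow, smul_pow, one_pow, smul_smul, smul_smul, ← add_smul, h]
    · refine ⟨?_, ((Commute.one_left _).smul_left t₁).eq⟩
      rw [smul_pow, one_pow, sq_traceless_fin_two_s15, smul_smul, smul_smul, ← add_smul, h]
    · have hg : (Int.gcd (v * a) (u - ε) : ℤ) ≠ 0 := by
        exact_mod_cast Int.gcd_ne_zero_right (sub_ne_zero.2 hu)
      exact sq_add_sq_eq_smul_one_and_commute_of_param hε₂ hN hg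
        (Int.mul_ediv_cancel' (Int.gcd_dvd_right _ _))
        (Int.mul_ediv_cancel' (Int.gcd_dvd_left _ _)) h

theorem stmt_15 (a b : ℤ) (ha : a ≠ 0) (hb : b ≠ 0)
    (hnsq : ¬ ∃ s : ℤ, -(a * b) = s ^ 2) (ε : ℤ) (hε : ε = 1 ∨ ε = -1)
    (X Y : Matrix (Fin 2) (Fin 2) ℤ) :
    (a • X ^ 2 + b • Y ^ 2 = ε • (1 : Matrix (Fin 2) (Fin 2) ℤ) ∧ X * Y = Y * X) ↔
    ((∃ t₁ t₂ : ℤ, X = t₁ • (1 : Matrix (Fin 2) (Fin 2) ℤ) ∧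
        Y = t₂ • (1 : Matrix (Fin 2) (Fin 2) ℤ) ∧ a * t₁ ^ 2 + b * t₂ ^ 2 = ε) ∨
     (∃ t₁ t₂ t₃ t₄ : ℤ, X = t₁ • (1 : Matrix (Fin 2) (Fin 2) ℤ) ∧
        Y = !![t₄, t₂; t₃, -t₄] ∧ a * t₁ ^ 2 + b * (t₄ ^ 2 + t₂ * t₃) = ε) ∨
     (∃ t₁ t₂ t₃ t₄ u v g : ℤ, u ≠ ε ∧ g = Int.gcd (v * a) (u - ε) ∧
        X = !![t₁, ((u - ε) / g) * t₂; ((u - ε) / g) * t₃, ε * (u * t₁ + v * b * t₄)] ∧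
        Y = !![t₄, (v * a / g) * t₂; (v * a / g) * t₃, ε * (v * a * t₁ - u * t₄)] ∧
        u ^ 2 + a * b * v ^ 2 = 1 ∧
        g ^ 2 * (a * t₁ ^ 2 + b * t₄ ^ 2) + 2 * a * t₂ * t₃ * (1 - ε * u) = ε * g ^ 2)) :=
  stmt_15_general a b ha hb ε hε X Y
end

section
/- Let b be a nonzero integer such that −b is not a perfect square, and suppose b has a prime divisor p with p ≡ 3 (mod 4). Then X, Y ∈ M₂(ℤ) satisfy X² + bY² = −I if and only if one of the following holds: (i) X = [[t₁, t₂],[t₃, −t₁]] and Y = [[s₁, s₂],[s₃, −s₁]] for integers with t₁² + t₂t₃ + b(s₁² + s₂s₃) = −1; (ii) b > 0 and X = [[t₁, t₂],[t₃, −t₁]], Y = t₄I for integers with t₁² + t₂t₃ + b·t₄² = −1; (iii) b < 0 and there exist integers t₁, t₂, t₃, t₄, u, v with u ≠ −1, g = gcd(v, u + 1), such that X = [[t₁, ((u+1)/g)·t₂],[((u+1)/g)·t₃, −(u·t₁ + v·b·t₄)]], Y = [[t₄, (v/g)·t₂],[(v/g)·t₃, u·t₄ − v·t₁]], and the relations u²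 + bv² = 1 and g²(t₁² + b·t₄²) + 2t₂t₃·(1 + u) = −g² hold. -/
set_option maxHeartbeats 1600000 in
theorem stmt_16 (b : ℤ) (hb : b ≠ 0) (hnsq : ¬ ∃ s : ℤ, -b = s ^ 2)
    (hp : ∃ p : ℕ, p.Prime ∧ (p : ℤ) ∣ b ∧ p % 4 = 3)
    (X Y : Matrix (Fin 2) (Fin 2) ℤ) :
    (X ^ 2 + b • Y ^ 2 = -(1 : Matrix (Fin 2) (Fin 2) ℤ)) ↔
    ((∃ t₁ t₂ t₃ s₁ s₂ s₃ : ℤ, X = !![t₁, t₂; t₃, -t₁] ∧ Y = !![s₁, s₂; s₃, -s₁] ∧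
        t₁ ^ 2 + t₂ * t₃ + b * (s₁ ^ 2 + s₂ * s₃) = -1) ∨
     (b > 0 ∧ ∃ t₁ t₂ t₃ t₄ : ℤ, X = !![t₁, t₂; t₃, -t₁] ∧
        Y = t₄ • (1 : Matrix (Fin 2) (Fin 2) ℤ) ∧ t₁ ^ 2 + t₂ * t₃ + b * t₄ ^ 2 = -1) ∨
     (b < 0 ∧ ∃ t₁ t₂ t₃ t₄ u v g : ℤ, u ≠ -1 ∧ g = Int.gcd v (u + 1) ∧
        X = !![t₁, ((u + 1) / g) * t₂; ((u + 1) / g) * t₃, -(u * t₁ + v * b * t₄)] ∧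
        Y = !![t₄, (v / g) * t₂; (v / g) * t₃, u * t₄ - v * t₁] ∧
        u ^ 2 + b * v ^ 2 = 1 ∧
        g ^ 2 * (t₁ ^ 2 + b * t₄ ^ 2) + 2 * t₂ * t₃ * (1 + u) = -g ^ 2)) := by
  obtain ⟨P, hPp, hPb, hP4⟩ := hp
  constructor
  · -- forward direction
    intro hm
    obtain ⟨x1, x2, x3, x4, hX⟩ : ∃ a p q d : ℤ, X = !![a, p; q, d] :=
      ⟨_, _, _, _, by ext i j; fin_cases i <;> fin_cases j <;> rfl⟩
    obtain ⟨y1, y2, y3, y4, hY⟩ : ∃ a p q d : ℤ, Y = !![a, p; q, d] :=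
      ⟨_, _, _, _, by ext i j; fin_cases i <;> fin_cases j <;> rfl⟩
    rw [hX, hY] at hm
    have hent : ∀ i j, ((!![x1, x2; x3, x4] : Matrix (Fin 2) (Fin 2) ℤ)^2 + b • (!![y1, y2; y3, y4] : Matrix (Fin 2) (Fin 2) ℤ)^2) i j = (-(1: Matrix (Fin 2) (Fin 2) ℤ)) i j :=
      fun i j => by rw [hm]
    have E1 := hent 0 0
    have E2 := hent 0 1
    have E3 := hent 1 0
    have E4 := hent 1 1
    simp only [pow_two, Matrix.add_apply, Matrix.mul_apply, Matrix.smul_apply,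
      Fin.sum_univ_two, Matrix.neg_apply, Matrix.one_apply, smul_eq_mul,
      Matrix.cons_val', Matrix.cons_val_zero, Matrix.cons_val_one, Matrix.head_cons,
      Matrix.head_fin_const, Matrix.empty_val', Matrix.cons_val_fin_one] at E1 E2 E3 E4
    norm_num at E1 E2 E3 E4
    rcases eq_or_ne (x1 + x4) 0 with hτ | hτ
    · rcases eq_or_ne (y1 + y4) 0 with hσ | hσ
      · -- case (i)
        refine Or.inl ⟨x1, x2, x3, y1, y2, y3, ?_, ?_, by linear_combination E1⟩
        · rw [hX, show x4 = -x1 by linarith]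
        · rw [hY, show y4 = -y1 by linarith]
      · -- trace X = 0, trace Y ≠ 0
        have hbσ : b * (y1 + y4) ≠ 0 := mul_ne_zero hb hσ
        have hy2 : y2 = 0 := by
          have h0 : b * (y1 + y4) * y2 = b * (y1 + y4) * 0 := by
            linear_combination E2 - x2 * hτ
          exact mul_left_cancel₀ hbσ h0
        have hy3 : y3 = 0 := by
          have h0 : b * (y1 + y4) * y3 = b * (y1 + y4) * 0 := by
            linear_combination E3 - x3 * hτ
          exact mul_left_cancel₀ hbσ h0
        have hy41 : y4 = y1 := by
          have h0 : b * (y1 + y4) * y4 = b * (y1 + y4) * y1 := by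
            linear_combination E4 - E1 - (x4 - x1) * hτ
          exact mul_left_cancel₀ hbσ h0
        rw [hy2, hy3] at E1
        rcases (lt_or_gt_of_ne hb) with hbneg | hbpos
        · refine Or.inr (Or.inr ⟨hbneg, x1, x2, x3, y1, 1, 0, 2, by norm_num, by decide, ?_, ?_, by norm_num, by linear_combination 4 * E1⟩)
          · rw [hX, show x4 = -x1 by linarith]; norm_num
          · rw [hY, hy2, hy3, hy41]; norm_num
        · refine Or.inr (Or.inl ⟨hbpos, x1, x2, x3, y1, ?_, ?_, by linear_combination E1⟩)
          · rw [hX, show x4 = -x1 by linarith]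
          · rw [hY, hy2, hy3, hy41]
            ext i j; fin_cases i <;> fin_cases j <;>
              simp [Matrix.smul_apply, Matrix.one_apply]
    · rcases eq_or_ne (y1 + y4) 0 with hσ | hσ
      · -- trace X ≠ 0, trace Y = 0 : contradiction via the prime
        exfalso
        have hx2' : x2 = 0 := by
          have h0 : (x1 + x4) * x2 = (x1 + x4) * 0 := by
            linear_combination E2 - b * y2 * hσ
          exact mul_left_cancel₀ hτ h0
        have hx3' : x3 = 0 := by
          have h0 : (x1 + x4) * x3 = (x1 + x4) * 0 := by
            linear_combination E3 - b * y3 * hσ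
          exact mul_left_cancel₀ hτ h0
        have hx41 : x4 = x1 := by
          have h0 : (x1 + x4) * x4 = (x1 + x4) * x1 := by
            linear_combination E4 - E1 - b * (y4 - y1) * hσ
          exact mul_left_cancel₀ hτ h0
        rw [hx2', hx3'] at E1
        haveI : Fact P.Prime := ⟨hPp⟩
        have hcast : ((x1 : ZMod P))^2 = -1 := by
          have h' := congrArg (fun z : ℤ => (z : ZMod P)) E1
          push_cast at h'
          rw [(ZMod.intCast_zmod_eq_zero_iff_dvd b P).mpr hPb] at h'
          linear_combination h'
        have hsq : IsSquare (-1 : ZMod P) := ⟨x1, by rw [← hcast]; ring⟩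
        exact (ZMod.exists_sq_eq_neg_one_iff.mp hsq) hP4
      · -- main case: both traces nonzero
        obtain ⟨u, hu⟩ : ∃ u : ℤ, u = (x1*x4 - x2*x3) - b*(y1*y4 - y2*y3) := ⟨_, rfl⟩
        obtain ⟨v, hv⟩ : ∃ v : ℤ, v = x1*y4 + x4*y1 - x2*y3 - x3*y2 := ⟨_, rfl⟩
        obtain ⟨c, hc⟩ : ∃ c : ℤ, c = (x1+x4)*x1 + b*(y1+y4)*y1 := ⟨_, rfl⟩
        have hcval : c = x1*x4 - x2*x3 + b*(y1*y4 - y2*y3) - 1 := by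
          linear_combination hc + E1
        have F11 : (x1+x4)*x4 + b*(y1+y4)*y4 = c := by linear_combination E4 - hcval
        have htr : (x1+x4)^2 + b*(y1+y4)^2 = 2*c := by linear_combination F11 - hc
        have A : (x1+x4)*v = (y1+y4)*(u-1) := by
          linear_combination (x1+x4)*hv - (y1+y4)*hu - y4*hc + y1*F11 - y3*E2 - y2*E3 + (y1+y4)*hcval
        have B : b*(y1+y4)*v = -((x1+x4)*(u+1)) := by
          linear_combination b*(y1+y4)*hv + (x1+x4)*hu + x1*F11 - x4*hc - x2*E3 - x3*E2 + (x1+x4)*hcval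
        have D : b*(y1+y4)^2*(u-1) + (x1+x4)^2*(u+1) = 0 := by
          linear_combination (x1+x4)*B - b*(y1+y4)*A
        have hE : (x1+x4)^2 = (1-u)*c := by
          have h2 : 2*((x1+x4)^2) = 2*((1-u)*c) := by
            linear_combination D - (u-1)*htr
          exact mul_left_cancel₀ two_ne_zero h2
        have hPell : u^2 + b*v^2 = 1 := by
          have h0 : ((x1+x4)*(y1+y4))*(u^2 + b*v^2) = ((x1+x4)*(y1+y4))*1 := by
            linear_combination (x1+x4)*v*B - (x1+x4)*(u+1)*A
          exact mul_left_cancel₀ (mul_ne_zero hτ hσ) h0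
        have hd : x4 = -(u*x1 + v*b*y1) := by
          have h0 : (x1+x4)*x4 = (x1+x4)*(-(u*x1 + v*b*y1)) := by
            linear_combination b*y1*A - (u-1)*hc + hE
          exact mul_left_cancel₀ hτ h0
        have hh : y4 = u*y1 - v*x1 := by
          have h0 : (b*(y1+y4))*y4 = (b*(y1+y4))*(u*y1 - v*x1) := by
            linear_combination F11 + u*hc + x1*B - hE
          exact mul_left_cancel₀ (mul_ne_zero hb hσ) h0
        have hT2 : v*x2 = (u+1)*y2 := by
          have h0 : (b*(y1+y4))*(v*x2) = (b*(y1+y4))*((u+1)*y2) := by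
            linear_combination x2*B - (u+1)*E2
          exact mul_left_cancel₀ (mul_ne_zero hb hσ) h0
        have hT3 : v*x3 = (u+1)*y3 := by
          have h0 : (b*(y1+y4))*(v*x3) = (b*(y1+y4))*((u+1)*y3) := by
            linear_combination x3*B - (u+1)*E3
          exact mul_left_cancel₀ (mul_ne_zero hb hσ) h0
        have hune : u ≠ -1 := by
          intro hu1
          have hv0 : v = 0 := by
            have hbv : b * v^2 = 0 := by rw [hu1] at hPell; linear_combination hPell
            rcases mul_eq_zero.mp hbv with h' | h'
            · exact absurd h' hb
            · exact pow_eq_zero_iff two_ne_zero |>.mp h'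
          rw [hv0, hu1] at A
          have : (y1 + y4) * (-1 - 1) = 0 := by linear_combination -A
          rcases mul_eq_zero.mp this with h' | h'
          · exact hσ h'
          · norm_num at h'
        have hu1ne : u + 1 ≠ 0 := fun h' => hune (by linarith)
        have hbneg : b < 0 := by
          rcases lt_or_gt_of_ne hb with h' | h'
          · exact h'
          exfalso
          have hP3 : (3:ℤ) ≤ (P:ℤ) := by
            have := hPp.two_le; omega
          have hb3 : (3:ℤ) ≤ b := le_trans hP3 (Int.le_of_dvd h' hPb)
          have hv0 : v = 0 := by
            by_contra hvne
            have h1 : 1 ≤ v^2 := by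
              rcases lt_or_gt_of_ne hvne with h'' | h'' <;> nlinarith
            nlinarith [sq_nonneg u]
          have hu2 : (u - 1) * (u + 1) = 0 := by
            rw [hv0] at hPell; linear_combination hPell
          have hu1 : u = 1 := by
            rcases mul_eq_zero.mp hu2 with h'' | h''
            · linarith
            · exact absurd (by linarith : u = -1) hune
          rw [hu1, hv0] at hd
          apply hτ
          rw [hd]; ring
        -- set up gcd and divisions
        set G : ℤ := (Int.gcd v (u+1) : ℤ) with hGdef
        have hG0 : G ≠ 0 := by
          simp only [hGdef, ne_eq, Int.natCast_eq_zero]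
          rw [Int.gcd_eq_zero_iff]
          push_neg
          intro _; exact hu1ne
        obtain ⟨k, hk⟩ : ∃ k : ℤ, (u+1)/G = k := ⟨_, rfl⟩
        obtain ⟨m, hmm⟩ : ∃ m : ℤ, v/G = m := ⟨_, rfl⟩
        have hk2 : G * k = u + 1 := by
          rw [← hk]; exact Int.mul_ediv_cancel' (Int.gcd_dvd_right ..)
        have hm2 : G * m = v := by
          rw [← hmm]; exact Int.mul_ediv_cancel' (Int.gcd_dvd_left ..)
        have hk0 : k ≠ 0 := by
          intro h'; rw [h', mul_zero] at hk2; exact hu1ne hk2.symm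
        have hcop : IsCoprime k m := by
          have hgpos : 0 < Int.gcd v (u+1) := by
            rcases Nat.eq_zero_or_pos (Int.gcd v (u+1)) with h' | h'
            · exact absurd (by exact_mod_cast h' : (Int.gcd v (u+1) : ℤ) = 0) hG0
            · exact h'
          have := Int.gcd_div_gcd_div_gcd (i := v) (j := u+1) hgpos
          rw [← hGdef, hk, hmm] at this
          exact Int.isCoprime_iff_gcd_eq_one.mpr (by rwa [Int.gcd_comm])
        -- m * x2 = k * y2
        have hmx2 : m * x2 = k * y2 := by
          have h0 : G * (m * x2) = G * (k * y2) := by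
            linear_combination x2*hm2 - y2*hk2 + hT2
          exact mul_left_cancel₀ hG0 h0
        have hmx3 : m * x3 = k * y3 := by
          have h0 : G * (m * x3) = G * (k * y3) := by
            linear_combination x3*hm2 - y3*hk2 + hT3
          exact mul_left_cancel₀ hG0 h0
        obtain ⟨t2, ht2⟩ : k ∣ x2 :=
          hcop.dvd_of_dvd_mul_left (Dvd.intro y2 hmx2.symm)
        obtain ⟨t3, ht3⟩ : k ∣ x3 :=
          hcop.dvd_of_dvd_mul_left (Dvd.intro y3 hmx3.symm)
        have hy2eq : y2 = m * t2 := by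
          have h0 : k * y2 = k * (m * t2) := by
            linear_combination m*ht2 - hmx2
          exact mul_left_cancel₀ hk0 h0
        have hy3eq : y3 = m * t3 := by
          have h0 : k * y3 = k * (m * t3) := by
            linear_combination m*ht3 - hmx3
          exact mul_left_cancel₀ hk0 h0
        refine Or.inr (Or.inr ⟨hbneg, x1, t2, t3, y1, u, v, G, hune, hGdef, ?_, ?_, hPell, ?_⟩)
        · rw [hX, ht2, ht3, hd, hk]
        · rw [hY, hy2eq, hy3eq, hh, hmm]
        · rw [ht2, ht3, hy2eq, hy3eq] at E1
          linear_combination G^2*E1 - t2*t3*(G*k + u + 1)*hk2 - b*t2*t3*(G*m + v)*hm2 - t2*t3*hPell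
  · -- backward direction
    rintro (⟨t1, t2, t3, s1, s2, s3, hXe, hYe, hrel⟩ |
            ⟨hbpos, t1, t2, t3, t4, hXe, hYe, hrel⟩ |
            ⟨hbneg, t1, t2, t3, t4, u, v, g, hune, hg, hXe, hYe, hPell, hrel⟩)
    · rw [hXe, hYe]
      ext i j
      fin_cases i <;> fin_cases j <;>
        simp only [pow_two, Matrix.add_apply, Matrix.mul_apply, Matrix.smul_apply,
          Fin.sum_univ_two, Matrix.neg_apply, Matrix.one_apply, smul_eq_mul,
          Matrix.cons_val', Matrix.cons_val_zero, Matrix.cons_val_one, Matrix.head_cons,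
          Matrix.head_fin_const, Matrix.empty_val', Matrix.cons_val_fin_one] <;>
        norm_num <;>
        first
          | ring1
          | linear_combination hrel
    · rw [hXe, hYe]
      ext i j
      fin_cases i <;> fin_cases j <;>
        simp only [pow_two, Matrix.add_apply, Matrix.mul_apply, Matrix.smul_apply,
          Fin.sum_univ_two, Matrix.neg_apply, Matrix.one_apply, smul_eq_mul,
          Matrix.cons_val', Matrix.cons_val_zero, Matrix.cons_val_one, Matrix.head_cons,
          Matrix.head_fin_const, Matrix.empty_val', Matrix.cons_val_fin_one] <;>
        norm_num <;>
        first
          | ring1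
          | linear_combination hrel
    · have hu1ne : u + 1 ≠ 0 := fun h' => hune (by linarith)
      have hgpos : (0:ℤ) < g := by
        rw [hg]
        have : Int.gcd v (u+1) ≠ 0 := fun h' => hu1ne ((Int.gcd_eq_zero_iff.mp h').2)
        exact_mod_cast Nat.pos_of_ne_zero this
      have hg0 : g ≠ 0 := ne_of_gt hgpos
      have hk2 : g * ((u+1)/g) = u + 1 := by
        rw [hg]; exact Int.mul_ediv_cancel' (Int.gcd_dvd_right ..)
      have hm2 : g * (v/g) = v := by
        rw [hg]; exact Int.mul_ediv_cancel' (Int.gcd_dvd_left ..)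
      obtain ⟨k, hk⟩ : ∃ k : ℤ, (u+1)/g = k := ⟨_, rfl⟩
      obtain ⟨m, hmm⟩ : ∃ m : ℤ, v/g = m := ⟨_, rfl⟩
      rw [hk] at hk2 hXe
      rw [hmm] at hm2 hYe
      have hg2ne : g^2 ≠ 0 := pow_ne_zero _ hg0
      rw [hXe, hYe]
      ext i j
      fin_cases i <;> fin_cases j <;>
        simp only [pow_two, Matrix.add_apply, Matrix.mul_apply, Matrix.smul_apply,
          Fin.sum_univ_two, Matrix.neg_apply, Matrix.one_apply, smul_eq_mul,
          Matrix.cons_val', Matrix.cons_val_zero, Matrix.cons_val_one, Matrix.head_cons,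
          Matrix.head_fin_const, Matrix.empty_val', Matrix.cons_val_fin_one] <;>
        norm_num
      · refine mul_left_cancel₀ hg2ne ?_
        linear_combination hrel + t2*t3*(g*k + u + 1)*hk2 + b*t2*t3*(g*m + v)*hm2 + t2*t3*hPell
      · refine mul_left_cancel₀ hg0 ?_
        linear_combination t2*((1-u)*t1 - v*b*t4)*hk2 + b*t2*((1+u)*t4 - v*t1)*hm2 - t1*t2*hPell
      · refine mul_left_cancel₀ hg0 ?_
        linear_combination t3*((1-u)*t1 - v*b*t4)*hk2 + b*t3*((1+u)*t4 - v*t1)*hm2 - t1*t3*hPell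
      · refine mul_left_cancel₀ hg2ne ?_
        linear_combination hrel + t2*t3*(g*k + u + 1)*hk2 + b*t2*t3*(g*m + v)*hm2 + t2*t3*hPell + g^2*(t1^2+b*t4^2)*hPell
end
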